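/- arXiv:1407.3516 — 5 statements merged into one kernel-verified Lean document; each statement's English description precedes it below -/
import Mathlib

section
/- For every integer n ≥ 1, the cardinality of 𝓛_n equals the Catalan number C_{n−1} = (1/n)·binomial(2n−2, n−1). -/
/-!
A word of `𝓛_n` starts with `0`, and when it is read from left to right only the current letter `c`
and the running maximum `M` matter: the next letter is either an old value in `[c - 1, M]`, or the
new maximum `M + 1`, which must later be followed by a smaller letter. Let `N q c M` count the
continuations of length `q` from the state `(c, M)`. Among the continuations that start with a new
maximum, those that never drop below `M + 1` again are shifted copies of the continuations from
`(0, 0)`, whence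
`N (q + 1) c M + N q 0 0 = ∑_{v = c - 1}^{M} N q v M + N q (M + 1) (M + 1)`.
This gives `N (q + 1) c (M + 1) = N (q + 1) c M + N q c (M + 2)` and `N (q + 1) 0 0 = N q 0 1`,
the recursion of the ballot numbers, so `(q + W + 1) N q 0 W = (W + 1) binom(2q + W, q)`; for
`W = 0` this is the Catalan number `C_q`.
-/

/-- A Catalan word: a word `a : Fin n → ℕ` satisfying (i) `a (i+1) ≥ a i - 1` for all
adjacent positions, and (ii) if `i` is the minimal index with `a i = k > 0`, then there
exist `i₁ < i < i₂` with `a i₁ = a i₂ = k - 1`. -/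
def IsCatalanWord {n : ℕ} (a : Fin n → ℕ) : Prop :=
  (∀ (i : ℕ) (h : i + 1 < n), a ⟨i, Nat.lt_of_succ_lt h⟩ ≤ a ⟨i + 1, h⟩ + 1) ∧
  (∀ i : Fin n, 0 < a i → (∀ j : Fin n, a j = a i → i ≤ j) →
    ((∃ i₁ : Fin n, i₁ < i ∧ a i₁ + 1 = a i) ∧ (∃ i₂ : Fin n, i < i₂ ∧ a i₂ + 1 = a i)))

/-- The number of letters of the word `a` equal to `c`. -/
noncomputable def countEq {n : ℕ} (a : Fin n → ℕ) (c : ℕ) : ℕ :=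
  Set.ncard {i : Fin n | a i = c}

open Finset

/-- A valid continuation `w` of a Catalan word whose prefix ends with the letter `c`, has maximum
`M`, and contains every letter `0, …, M`. -/
def IsCatalanSuffix (c M : ℕ) {q : ℕ} (w : Fin q → ℕ) : Prop :=
  (∀ i : Fin q, (Fin.cons c w : Fin (q + 1) → ℕ) i.castSucc ≤ w i + 1) ∧
  ∀ i, M < w i → (∀ j, w j = w i → i ≤ j) →
    (w i = M + 1 ∨ ∃ j < i, w j + 1 = w i) ∧ ∃ j, i < j ∧ w j + 1 = w i

lemma exists_add_one_eq_of_lt {q x : ℕ} {t : Fin q → ℕ}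
    (ht : ∀ i : Fin q, (Fin.cons x t : Fin (q + 1) → ℕ) i.castSucc ≤ t i + 1)
    {j : Fin q} (hj : t j < x) : ∃ j, t j + 1 = x := by
  obtain ⟨k, hk⟩ := j
  induction k with
  | zero =>
    have h0 := ht ⟨0, hk⟩
    rw [show (⟨0, hk⟩ : Fin q).castSucc = 0 from rfl, Fin.cons_zero] at h0
    exact ⟨⟨0, hk⟩, by omega⟩
  | succ k ih =>
    by_cases hprev : t ⟨k, by omega⟩ < x
    · exact ih (by omega) hprev
    · refine ⟨⟨k + 1, hk⟩, ?_⟩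
      have := ht ⟨k + 1, hk⟩
      rw [show (⟨k + 1, hk⟩ : Fin q).castSucc = (⟨k, by omega⟩ : Fin q).succ from rfl,
        Fin.cons_succ] at this
      omega

lemma isCatalanSuffix_cons_iff {q c M x : ℕ} {t : Fin q → ℕ} :
    IsCatalanSuffix c M (Fin.cons x t : Fin (q + 1) → ℕ) ↔
      c ≤ x + 1 ∧ x ≤ M + 1 ∧ (x = M + 1 → ∃ j, t j < x) ∧ IsCatalanSuffix x (max M x) t := by
  unfold IsCatalanSuffix
  simp only [Fin.forall_fin_succ, Fin.exists_fin_succ, Fin.cons_zero, Fin.cons_succ,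
    Fin.castSucc_zero, ← Fin.succ_castSucc]
  simp only [Std.le_refl, imp_self, zero_le, implies_true, and_self, lt_self_iff_false,
    Nat.add_eq_left, one_ne_zero, not_lt_zero, false_and, exists_false, or_self, or_false,
    Fin.succ_pos, true_and, false_or, forall_const, nonpos_iff_eq_zero, Fin.succ_ne_zero, imp_false,
    Fin.succ_le_succ_iff, Fin.succ_lt_succ_iff, and_imp, sup_lt_iff]
  constructor
  · rintro ⟨⟨hcx, hchain⟩, hx, hnew⟩
    refine ⟨hcx, ?_, fun hxM => ?_, hchain, fun i hMi hxi hfirst => ?_⟩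
    · by_contra h
      exact absurd (hx (by omega)).1 (by omega)
    · obtain ⟨j, hj⟩ := (hx (by omega)).2
      exact ⟨j, by omega⟩
    · obtain ⟨h | h | h, hlater⟩ := hnew i hMi (by omega) hfirst
      · exact ⟨Or.inl (by omega), hlater⟩
      · exact ⟨Or.inl (by omega), hlater⟩
      · exact ⟨Or.inr h, hlater⟩
  · rintro ⟨hcx, hxM, hx, hchain, hnew⟩
    refine ⟨⟨hcx, hchain⟩, fun hMx => ⟨by omega, ?_⟩, fun i hMi hxi hfirst => ?_⟩
    · obtain ⟨j, hj⟩ := hx (by omega)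
      exact exists_add_one_eq_of_lt hchain hj
    · obtain ⟨h | h, hlater⟩ := hnew i hMi (by omega) hfirst
      · exact ⟨by omega, hlater⟩
      · exact ⟨Or.inr (Or.inr h), hlater⟩

lemma isCatalanWord_cons_iff {q x : ℕ} {t : Fin q → ℕ} :
    IsCatalanWord (Fin.cons x t : Fin (q + 1) → ℕ) ↔ x = 0 ∧ IsCatalanSuffix 0 0 t := by
  unfold IsCatalanWord IsCatalanSuffix
  have hsteps : ∀ a : Fin (q + 1) → ℕ, (∀ (i : ℕ) (h : i + 1 < q + 1),
      a ⟨i, Nat.lt_of_succ_lt h⟩ ≤ a ⟨i + 1, h⟩ + 1) ↔ ∀ i : Fin q, a i.castSucc ≤ a i.succ + 1 :=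
    fun a => ⟨fun h i => h i (by omega), fun h i hi => h ⟨i, by omega⟩⟩
  rw [hsteps]
  simp only [Fin.forall_fin_succ, Fin.exists_fin_succ, Fin.cons_zero, Fin.cons_succ]
  simp only [Std.le_refl, imp_self, zero_le, implies_true, and_self, lt_self_iff_false,
    Nat.add_eq_left, one_ne_zero, not_lt_zero, false_and, exists_false, or_self, Fin.succ_pos,
    true_and, false_or, imp_false, not_true_eq_false, not_lt, nonpos_iff_eq_zero, Fin.succ_ne_zero,
    Fin.succ_le_succ_iff, Fin.succ_lt_succ_iff, and_imp, zero_add]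
  constructor
  · rintro ⟨hchain, rfl, hnew⟩
    refine ⟨rfl, hchain, fun i hi hfirst => ?_⟩
    simpa only [eq_comm] using hnew i hi hi.ne hfirst
  · rintro ⟨rfl, hchain, hnew⟩
    refine ⟨hchain, rfl, fun i hi _ hfirst => ?_⟩
    simpa only [eq_comm] using hnew i hi hfirst

lemma isCatalanSuffix_add_iff {q : ℕ} (c M s : ℕ) (w : Fin q → ℕ) :
    IsCatalanSuffix (c + s) (M + s) ((· + s) ∘ w) ↔ IsCatalanSuffix c M w := by
  have hcons : (Fin.cons (c + s) ((· + s) ∘ w) : Fin (q + 1) → ℕ) = (· + s) ∘ Fin.cons c w :=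
    (Fin.comp_cons (· + s) c w).symm
  simp only [IsCatalanSuffix, hcons, Function.comp_apply]
  simp [add_right_comm _ s 1]

def consEmbedding {q : ℕ} (v : ℕ) : (Fin q → ℕ) ↪ (Fin (q + 1) → ℕ) where
  toFun := Fin.cons (α := fun _ => ℕ) v
  inj' := Fin.cons_right_injective (α := fun _ => ℕ) v

lemma consEmbedding_apply {q : ℕ} (v : ℕ) (t : Fin q → ℕ) : consEmbedding v t = Fin.cons v t := rfl

def catalanSuffixes : (q c M : ℕ) → Finset (Fin q → ℕ)
  | 0, _, _ => {Fin.elim0}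
  | q + 1, c, M =>
    (Icc (c - 1) M).biUnion (fun v => (catalanSuffixes q v M).map (consEmbedding v)) ∪
      {t ∈ catalanSuffixes q (M + 1) (M + 1) | ∃ j, t j < M + 1}.map (consEmbedding (M + 1))

lemma mem_catalanSuffixes {q c M : ℕ} (hc : c ≤ M + 1) {w : Fin q → ℕ} :
    w ∈ catalanSuffixes q c M ↔ IsCatalanSuffix c M w := by
  induction q generalizing c M with
  | zero => simp [catalanSuffixes, IsCatalanSuffix, Subsingleton.elim w Fin.elim0]
  | succ q ih =>
    obtain ⟨x, t, rfl⟩ : ∃ x t, w = Fin.cons x t := ⟨w 0, Fin.tail w, (Fin.cons_self_tail w).symm⟩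
    simp only [catalanSuffixes, mem_union, mem_biUnion, mem_Icc, mem_map, mem_filter,
      consEmbedding_apply, Fin.cons_inj, exists_eq_right_right, isCatalanSuffix_cons_iff]
    rcases lt_trichotomy x (M + 1) with hx | rfl | hx
    · rw [ih (by omega), max_eq_left (by omega)]
      constructor
      · rintro (⟨⟨h1, -⟩, ht⟩ | ⟨-, h⟩)
        · exact ⟨by omega, hx.le, by omega, ht⟩
        · omega
      · rintro ⟨h1, -, -, ht⟩
        exact Or.inl ⟨⟨by omega, by omega⟩, ht⟩
    · rw [ih (M := M + 1) (by omega), max_eq_right (by omega)]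
      constructor
      · rintro (⟨⟨-, h⟩, -⟩ | ⟨⟨ht, hj⟩, -⟩)
        · omega
        · exact ⟨by omega, le_rfl, fun _ => hj, ht⟩
      · rintro ⟨-, -, hj, ht⟩
        exact Or.inr ⟨⟨ht, hj rfl⟩, rfl⟩
    · constructor
      · rintro (⟨⟨-, h⟩, -⟩ | ⟨-, h⟩) <;> omega
      · rintro ⟨-, h, -⟩
        omega

lemma card_filter_forall_le_catalanSuffixes (q M : ℕ) :
    #{t ∈ catalanSuffixes q (M + 1) (M + 1) | ∀ j, M + 1 ≤ t j} = #(catalanSuffixes q 0 0) := by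
  rw [← card_map (addRightEmbedding (M + 1)).arrowCongrRight (s := catalanSuffixes q 0 0)]
  congr 1
  ext w
  have hshift := isCatalanSuffix_add_iff (q := q) 0 0 (M + 1)
  simp only [zero_add] at hshift
  simp only [mem_filter, mem_map, Function.Embedding.arrowCongrRight_apply,
    mem_catalanSuffixes (Nat.le_succ _)]
  constructor
  · rintro ⟨hw, hle⟩
    have hsub : (· + (M + 1)) ∘ (· - (M + 1)) ∘ w = w :=
      funext fun j => Nat.sub_add_cancel (hle j)
    exact ⟨_, by rwa [← hshift, hsub], hsub⟩
  · rintro ⟨u, hu, rfl⟩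
    exact ⟨(hshift u).2 hu, fun j => by simp⟩

lemma card_catalanSuffixes_succ_add (q c M : ℕ) :
    #(catalanSuffixes (q + 1) c M) + #(catalanSuffixes q 0 0) =
      ∑ v ∈ Icc (c - 1) M, #(catalanSuffixes q v M) + #(catalanSuffixes q (M + 1) (M + 1)) := by
  have hdisj : ((Icc (c - 1) M : Finset ℕ) : Set ℕ).PairwiseDisjoint
      (fun v => (catalanSuffixes q v M).map (consEmbedding v)) := by
    intro u _ v _ huv
    simp only [Function.onFun, disjoint_left, mem_map, consEmbedding_apply]
    rintro _ ⟨s, -, rfl⟩ ⟨t, -, h⟩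
    exact huv (Fin.cons_inj.mp h).1.symm
  have hnew : Disjoint
      ((Icc (c - 1) M).biUnion (fun v => (catalanSuffixes q v M).map (consEmbedding v)))
      ({t ∈ catalanSuffixes q (M + 1) (M + 1) | ∃ j, t j < M + 1}.map (consEmbedding (M + 1))) := by
    simp only [disjoint_left, mem_biUnion, mem_map, mem_Icc, consEmbedding_apply]
    rintro _ ⟨v, ⟨-, hv⟩, s, -, rfl⟩ ⟨t, -, h⟩
    have := (Fin.cons_inj.mp h).1
    omega
  rw [catalanSuffixes, card_union_of_disjoint hnew, card_biUnion hdisj]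
  simp only [card_map]
  rw [add_assoc, ← card_filter_forall_le_catalanSuffixes q M]
  congr 1
  simpa only [not_exists, not_lt] using
    card_filter_add_card_filter_not (s := catalanSuffixes q (M + 1) (M + 1)) (∃ j, · j < M + 1)

lemma catalanSuffixes_one_eq_zero (q M : ℕ) : catalanSuffixes q 1 M = catalanSuffixes q 0 M := by
  cases q <;> rfl

lemma card_catalanSuffixes_length_zero (c M : ℕ) : #(catalanSuffixes 0 c M) = 1 := rfl

lemma card_catalanSuffixes_length_one (c M : ℕ) : #(catalanSuffixes 1 c M) = #(Icc (c - 1) M) := by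
  have h := card_catalanSuffixes_succ_add 0 c M
  simp only [Nat.reduceAdd, card_catalanSuffixes_length_zero, sum_const, smul_eq_mul, mul_one] at h
  omega

lemma card_catalanSuffixes_max_succ (q : ℕ) {c M : ℕ} (hc : c ≤ M + 1) :
    #(catalanSuffixes (q + 1) c (M + 1)) =
      #(catalanSuffixes (q + 1) c M) + #(catalanSuffixes q c (M + 2)) := by
  induction q generalizing c M with
  | zero =>
    simp only [Nat.reduceAdd, card_catalanSuffixes_length_one, card_catalanSuffixes_length_zero,
      Nat.card_Icc]
    omega
  | succ q ih =>
    have E1 := card_catalanSuffixes_succ_add (q + 1) c (M + 1)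
    have E2 := card_catalanSuffixes_succ_add (q + 1) c M
    have E3 := card_catalanSuffixes_succ_add q c (M + 2)
    have E4 := card_catalanSuffixes_succ_add q (M + 2) (M + 2)
    have hih : ∑ v ∈ Icc (c - 1) M, #(catalanSuffixes (q + 1) v (M + 1)) =
        ∑ v ∈ Icc (c - 1) M, #(catalanSuffixes (q + 1) v M) +
          ∑ v ∈ Icc (c - 1) M, #(catalanSuffixes q v (M + 2)) := by
      rw [← sum_add_distrib]
      exact sum_congr rfl fun v hv => ih (by simp only [mem_Icc] at hv; omega)
    rw [sum_Icc_succ_top (by omega)] at E1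
    rw [sum_Icc_succ_top (by omega), sum_Icc_succ_top (by omega)] at E3
    have hpair : Icc (M + 1) (M + 2) = {M + 1, M + 2} := by
      ext
      simp only [mem_Icc, mem_insert, mem_singleton]
      omega
    rw [show M + 2 - 1 = M + 1 by omega, hpair, sum_pair (by omega)] at E4
    simp only [show M + 1 + 1 = M + 2 by omega, show M + 2 + 1 = M + 3 by omega] at E1 E3 E4
    omega

lemma card_catalanSuffixes_succ_zero_zero (q : ℕ) :
    #(catalanSuffixes (q + 1) 0 0) = #(catalanSuffixes q 0 1) := by
  have h := card_catalanSuffixes_succ_add q 0 0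
  rw [Nat.zero_sub, Icc_self, sum_singleton, zero_add, catalanSuffixes_one_eq_zero] at h
  omega

theorem card_catalanSuffixes_ballot (q W : ℕ) :
    (q + W + 1) * #(catalanSuffixes q 0 W) = (W + 1) * (2 * q + W).choose q := by
  induction q generalizing W with
  | zero => simp [card_catalanSuffixes_length_zero]
  | succ q ihq =>
    induction W with
    | zero =>
      have hchoose : (2 * (q + 1) + 0).choose (q + 1) = 2 * (2 * q + 1).choose q := by
        rw [show 2 * (q + 1) + 0 = 2 * q + 1 + 1 by ring, Nat.choose_succ_succ,
          Nat.choose_symm_half]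
        ring
      have h := ihq 1
      rw [card_catalanSuffixes_succ_zero_zero, hchoose]
      linear_combination h
    | succ W ihW =>
      set n := 2 * q + W + 2
      have hpascal : (2 * (q + 1) + (W + 1)).choose (q + 1) = n.choose q + n.choose (q + 1) := by
        rw [show 2 * (q + 1) + (W + 1) = n + 1 by omega, Nat.choose_succ_succ']
      have hratio : n.choose (q + 1) * (q + 1) = n.choose q * (q + W + 2) := by
        rw [Nat.choose_succ_right_eq, show n - q = q + W + 2 by omega]
      have h2 := ihq (W + 2)
      rw [show 2 * (q + 1) + W = n by ring] at ihW
      rw [show 2 * q + (W + 2) = n by ring] at h2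
      rw [card_catalanSuffixes_max_succ q (by omega), hpascal]
      apply Nat.eq_of_mul_eq_mul_left (show 0 < q + W + 2 by omega)
      linear_combination (q + W + 3) * ihW + (q + W + 2) * h2 - hratio

theorem card_catalanSuffixes_zero_zero (q : ℕ) : #(catalanSuffixes q 0 0) = catalan q := by
  have h := card_catalanSuffixes_ballot q 0
  rw [zero_add, one_mul, add_zero, add_zero, ← Nat.centralBinom_eq_two_mul_choose,
    ← succ_mul_catalan_eq_centralBinom] at h
  exact Nat.eq_of_mul_eq_mul_left q.succ_pos h

lemma setOf_isCatalanWord_eq (q : ℕ) :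
    {a : Fin (q + 1) → ℕ | IsCatalanWord a} =
      Fin.cons 0 '' (catalanSuffixes q 0 0 : Set (Fin q → ℕ)) := by
  ext a
  obtain ⟨x, t, rfl⟩ : ∃ x t, a = Fin.cons x t := ⟨a 0, Fin.tail a, (Fin.cons_self_tail a).symm⟩
  simp [isCatalanWord_cons_iff, mem_catalanSuffixes, Fin.cons_inj, eq_comm, and_comm]

lemma cast_catalan_eq_choose_div (q : ℕ) : (catalan q : ℚ) = (2 * q).choose q / (q + 1) := by
  rw [eq_div_iff (by positivity), ← Nat.centralBinom_eq_two_mul_choose,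
    ← succ_mul_catalan_eq_centralBinom]
  push_cast
  ring

/-- The cardinality of `𝓛 n` is the Catalan number `C (n-1) = (1/n) * choose (2n-2) (n-1)`. -/
theorem card_catalanWords (n : ℕ) (hn : 1 ≤ n) :
    Set.ncard {a : Fin n → ℕ | IsCatalanWord a} = catalan (n - 1) ∧
    (Set.ncard {a : Fin n → ℕ | IsCatalanWord a} : ℚ) =
      (Nat.choose (2 * n - 2) (n - 1) : ℚ) / (n : ℚ) := by
  obtain ⟨q, rfl⟩ : ∃ q, n = q + 1 := ⟨n - 1, by omega⟩
  have hcard : Set.ncard {a : Fin (q + 1) → ℕ | IsCatalanWord a} = catalan q := by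
    rw [setOf_isCatalanWord_eq, Set.ncard_image_of_injective _ (Fin.cons_right_injective _),
      Set.ncard_coe_finset, card_catalanSuffixes_zero_zero]
  rw [hcard, cast_catalan_eq_choose_div, Nat.add_sub_cancel, show 2 * (q + 1) - 2 = 2 * q by omega]
  exact ⟨rfl, by push_cast; rfl⟩
end

section
/- For n ≥ 2 and 1 ≤ m ≤ n−1, a(n,m) = Σ_{j=1}^{n−m} (binomial(j+m−1, j) − 1)·a(n−m, j); moreover a(n,n) = 1 for all n ≥ 1. -/
/-- `aZ n m` is the number of Catalan words of length `n` with exactly `m` zeros. -/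
noncomputable def aZ (n m : ℕ) : ℕ :=
  Set.ncard {a : Fin n → ℕ | IsCatalanWord a ∧ countEq a 0 = m}

/-!
A letter of a word in `𝓛_n` drops by at most one, so every `0` is preceded by `0` or `1`. Hence a
word with `m` zeros and `j` ones is determined by the length `c` of its initial run of zeros, the
lengths `cs` of the runs of zeros following its `j` ones, and the word `b` obtained by deleting the
zeros and lowering the other letters by one. This is a bijection onto the triples with
`b ∈ 𝓛_{n-m}` having `j` zeros, `c = m - Σ cs`, `c ≥ 1` (the word starts with `0`) and `Σ cs ≥ 1`
(some `0` follows the first `1`). Stars and bars leaves `binomial(j + m - 1, j) - 1` choices of `cs`.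
-/

namespace CatalanList

open List

theorem exists_eq_append_cons_of_mem {α : Type*} {x : α} {l : List α} (h : x ∈ l) :
    ∃ p s, l = p ++ x :: s ∧ x ∉ p := by
  induction l with
  | nil => simp at h
  | cons y l ih =>
    by_cases hxy : x = y
    · exact ⟨[], l, by simp [hxy], by simp⟩
    · obtain ⟨p, s, rfl, hp⟩ := ih (by simpa [hxy] using h)
      exact ⟨y :: p, s, rfl, by simp [hp, hxy]⟩

theorem eq_of_append_cons_eq_of_notMem {α : Type*} {x : α} {p s p' s' : List α}
    (h : p ++ x :: s = p' ++ x :: s') (hp : x ∉ p) (hp' : x ∉ p') : p = p' ∧ s = s' := by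
  rcases append_eq_append_iff.1 h with ⟨a, rfl, ha⟩ | ⟨a, rfl, ha⟩
  · rcases a with _ | ⟨y, a⟩ <;> simp_all
  · rcases a with _ | ⟨y, a⟩ <;> simp_all

theorem mem_take_ofFn {α : Type*} {n t : ℕ} {a : Fin n → α} {x : α} :
    x ∈ (ofFn a).take t ↔ ∃ j : Fin n, j < t ∧ a j = x := by
  simp only [mem_take_iff_getElem, length_ofFn, lt_min_iff, List.getElem_ofFn, Fin.exists_iff]
  exact ⟨fun ⟨j, ⟨ht, hn⟩, e⟩ => ⟨j, hn, ht, e⟩,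
    fun ⟨j, hn, ht, e⟩ => ⟨j, ⟨ht, hn⟩, e⟩⟩

theorem mem_drop_ofFn {α : Type*} {n t : ℕ} {a : Fin n → α} {x : α} :
    x ∈ (ofFn a).drop t ↔ ∃ j : Fin n, t ≤ j ∧ a j = x := by
  simp only [mem_drop_iff_getElem, length_ofFn, List.getElem_ofFn, Fin.exists_iff]
  constructor
  · rintro ⟨j, hj, e⟩
    exact ⟨t + j, by omega, by omega, e⟩
  · rintro ⟨i, hti, hi, e⟩
    exact ⟨i - t, by omega, by convert e using 3; omega⟩

-- Conditions (i) and (ii) of `IsCatalanWord`, for lists.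
def NoBigDescent (l : List ℕ) : Prop := l.IsChain (fun x y => x ≤ y + 1)

def FirstOccFlanked (l : List ℕ) : Prop :=
  ∀ p k s, l = p ++ (k + 1) :: s → k + 1 ∉ p → k ∈ p ∧ k ∈ s

theorem firstOccFlanked_iff {l : List ℕ} : FirstOccFlanked l ↔
    ∀ i (hi : i < l.length), 0 < l[i] → l[i] ∉ l.take i →
      l[i] - 1 ∈ l.take i ∧ l[i] - 1 ∈ l.drop (i + 1) := by
  constructor
  · intro h i hi hpos hnot
    obtain ⟨k, hk⟩ : ∃ k, l[i] = k + 1 := ⟨l[i] - 1, by omega⟩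
    have hl : l = l.take i ++ (k + 1) :: l.drop (i + 1) := by
      rw [← hk, ← drop_eq_getElem_cons hi, take_append_drop]
    simpa [hk] using h _ k _ hl (hk ▸ hnot)
  · rintro h p k s rfl hp
    simpa using h p.length (by simp) (by simp) (by simpa using hp)

theorem isCatalanWord_iff {n : ℕ} (a : Fin n → ℕ) :
    IsCatalanWord a ↔ NoBigDescent (ofFn a) ∧ FirstOccFlanked (ofFn a) := by
  refine and_congr (by rw [NoBigDescent, isChain_ofFn]) ?_
  rw [firstOccFlanked_iff]
  simp only [length_ofFn, List.getElem_ofFn, mem_take_ofFn, mem_drop_ofFn]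
  refine Fin.forall_iff.trans (forall₂_congr fun i hi => imp_congr_right fun hpos => ?_)
  have hpred : ∀ x, x + 1 = a ⟨i, hi⟩ ↔ x = a ⟨i, hi⟩ - 1 := by omega
  simp only [hpred, Fin.lt_def, Fin.le_def, not_exists, not_and, Nat.add_one_le_iff]
  exact imp_congr_left (forall_congr' fun j => by rw [← not_lt, imp_not_comm])

theorem countEq_eq_count {n : ℕ} (a : Fin n → ℕ) (c : ℕ) :
    countEq a c = (ofFn a).count c := by
  classical
  rw [countEq, Set.ncard_eq_toFinset_card', Set.toFinset_ofPred, ← Multiset.coe_count,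
    ← Fin.univ_val_map, Multiset.count_map, Finset.card_def, Finset.filter_val]
  simp only [eq_comm]

theorem noBigDescent_cons (x : ℕ) (l : List ℕ) :
    NoBigDescent (x :: l) ↔ (∀ y ∈ l.head?, x ≤ y + 1) ∧ NoBigDescent l := isChain_cons

theorem noBigDescent_replicate_zero_append (q : ℕ) (r : List ℕ) :
    NoBigDescent (replicate q 0 ++ r) ↔ NoBigDescent r := by
  induction q with
  | zero => simp
  | succ q ih => simp [replicate_succ, noBigDescent_cons, ih]

def catalanLists (n m : ℕ) : Set (List ℕ) :=
  {l | l.length = n ∧ NoBigDescent l ∧ FirstOccFlanked l ∧ l.count 0 = m}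

theorem aZ_eq_ncard_catalanLists (n m : ℕ) : aZ n m = (catalanLists n m).ncard := by
  have : catalanLists n m = ofFn '' {a : Fin n → ℕ | IsCatalanWord a ∧ countEq a 0 = m} := by
    ext l
    simp only [catalanLists, Set.mem_image, Set.mem_ofPred_eq, isCatalanWord_iff, countEq_eq_count]
    constructor
    · rintro ⟨rfl, h⟩
      exact ⟨l.get, by simpa only [ofFn_get, and_assoc] using h, ofFn_get l⟩
    · rintro ⟨a, ⟨⟨hnd, hfo⟩, h0⟩, rfl⟩
      exact ⟨length_ofFn, hnd, hfo, h0⟩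
  rw [aZ, this, Set.ncard_image_of_injective _ ofFn_injective]

theorem catalanLists_self (n : ℕ) : catalanLists n n = {replicate n 0} := by
  ext l
  simp only [catalanLists, Set.mem_ofPred_eq, Set.mem_singleton_iff]
  constructor
  · rintro ⟨hlen, -, -, h0⟩
    exact eq_replicate_iff.2
      ⟨hlen, fun b hb => (count_eq_length.1 (h0.trans hlen.symm) b hb).symm⟩
  · rintro rfl
    refine ⟨length_replicate, ?_, ?_, count_replicate_self⟩
    · simpa using (noBigDescent_replicate_zero_append n []).2 isChain_nil
    · intro p k s h _
      have : k + 1 ∈ replicate n 0 := h ▸ by simp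
      simp [mem_replicate] at this

namespace FirstOccFlanked

variable {l : List ℕ}

theorem mem_of_succ_mem {k : ℕ} (hl : FirstOccFlanked l) (h : k + 1 ∈ l) : k ∈ l := by
  obtain ⟨p, s, rfl, hp⟩ := exists_eq_append_cons_of_mem h
  exact mem_append_left _ (hl p k s rfl hp).1

theorem mem_of_le {x k : ℕ} (hl : FirstOccFlanked l) (hx : x ∈ l) (hk : k ≤ x) : k ∈ l := by
  induction x with
  | zero => rwa [Nat.le_zero.1 hk]
  | succ x ih =>
    rcases Nat.of_le_succ hk with hk | rfl
    · exact ih (hl.mem_of_succ_mem hx) hk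
    · exact hx

theorem lt_length {x : ℕ} (hl : FirstOccFlanked l) (hx : x ∈ l) : x < l.length := by
  classical
  have : Finset.range (x + 1) ⊆ l.toFinset := fun k hk =>
    mem_toFinset.2 (hl.mem_of_le hx (Finset.mem_range_succ_iff.1 hk))
  simpa using (Finset.card_le_card this).trans (toFinset_card_le l)

end FirstOccFlanked

theorem finite_length_eq_forall_lt (n M : ℕ) :
    {l : List ℕ | l.length = n ∧ ∀ x ∈ l, x < M}.Finite := by
  refine ((List.finite_length_eq (Fin M) n).image (map Fin.val)).subset ?_
  rintro l ⟨hn, hM⟩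
  lift l to List (Fin M) using hM
  exact ⟨l, by simpa using hn, rfl⟩

theorem finite_catalanLists (n m : ℕ) : (catalanLists n m).Finite :=
  (finite_length_eq_forall_lt n n).subset fun _ ⟨hn, _, hfo, _⟩ =>
    ⟨hn, fun _ hx => hn ▸ hfo.lt_length hx⟩

theorem count_zero_add_count_one_le_length (l : List ℕ) : l.count 0 + l.count 1 ≤ l.length := by
  induction l with
  | nil => simp
  | cons x l ih => rcases x with _ | _ | x <;> simp <;> omega

def catalanListsWithOnes (n m j : ℕ) : Set (List ℕ) := {l ∈ catalanLists n m | l.count 1 = j}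

theorem ncard_catalanLists_eq_sum {n m : ℕ} (hmn : m < n) :
    (catalanLists n m).ncard =
      ∑ j ∈ Finset.Icc 1 (n - m), (catalanListsWithOnes n m j).ncard := by
  classical
  have hfin := finite_catalanLists n m
  have hmaps : ∀ l ∈ hfin.toFinset, l.count 1 ∈ Finset.Icc 1 (n - m) := by
    intro l hl
    obtain ⟨hlen, -, hfo, h0⟩ := hfin.mem_toFinset.1 hl
    obtain ⟨x, hx, hx0⟩ : ∃ x ∈ l, x ≠ 0 := by
      by_contra! h
      have := count_eq_length.2 fun b hb => (h b hb).symm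
      omega
    have h1 := count_pos_iff.2 (hfo.mem_of_le hx (Nat.one_le_iff_ne_zero.2 hx0))
    have := count_zero_add_count_one_le_length l
    rw [Finset.mem_Icc]
    omega
  rw [Set.ncard_eq_toFinset_card _ hfin, Finset.card_eq_sum_card_fiberwise hmaps]
  refine Finset.sum_congr rfl fun j _ => ?_
  rw [Set.ncard_eq_toFinset_card _ (hfin.subset fun _ hl => hl.1)]
  congr 1
  ext l
  simp [catalanListsWithOnes]

def strip (l : List ℕ) : List ℕ := (l.filter (· ≠ 0)).map (· - 1)

def expand : List ℕ → List ℕ → List ℕ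
  | _, [] => []
  | cs, 0 :: b => 1 :: (replicate cs.headI 0 ++ expand cs.tail b)
  | cs, (x + 1) :: b => (x + 2) :: expand cs b

@[simp] theorem expand_nil (cs : List ℕ) : expand cs [] = [] := rfl

@[simp] theorem expand_zero_cons (cs b : List ℕ) :
    expand cs (0 :: b) = 1 :: (replicate cs.headI 0 ++ expand cs.tail b) := rfl

@[simp] theorem expand_succ_cons (cs b : List ℕ) (x : ℕ) :
    expand cs ((x + 1) :: b) = (x + 2) :: expand cs b := rfl

@[simp] theorem strip_cons_zero (l : List ℕ) : strip (0 :: l) = strip l := by simp [strip]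

@[simp] theorem strip_cons_succ (x : ℕ) (l : List ℕ) : strip ((x + 1) :: l) = x :: strip l := by
  simp [strip]

@[simp] theorem strip_append (l₁ l₂ : List ℕ) :
    strip (l₁ ++ l₂) = strip l₁ ++ strip l₂ := by
  simp [strip]

@[simp] theorem strip_replicate_zero (q : ℕ) : strip (replicate q 0) = [] := by
  simp [strip]

@[simp] theorem strip_expand (cs b : List ℕ) : strip (expand cs b) = b := by
  induction b generalizing cs with
  | nil => rfl
  | cons x b ih => rcases x with _ | x <;> simp [ih]

theorem succ_mem_expand_iff {x : ℕ} (cs b : List ℕ) : x + 1 ∈ expand cs b ↔ x ∈ b := by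
  induction b generalizing cs with
  | nil => simp
  | cons y b ih => rcases y with _ | y <;> simp [ih, mem_replicate]

theorem expand_append (cs p q : List ℕ) :
    expand cs (p ++ q) = expand cs p ++ expand (cs.drop (p.count 0)) q := by
  induction p generalizing cs with
  | nil => simp
  | cons x p ih =>
    rcases x with _ | x
    · simp [ih, drop_drop, Nat.add_comm, ← drop_one]
    · simp [ih]

theorem count_one_expand (cs b : List ℕ) : (expand cs b).count 1 = b.count 0 := by
  induction b generalizing cs with
  | nil => simp
  | cons x b ih => rcases x with _ | x <;> simp [count_replicate, ih]

theorem count_zero_expand {cs b : List ℕ} (h : cs.length = b.count 0) :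
    (expand cs b).count 0 = cs.sum := by
  induction b generalizing cs with
  | nil => simp_all
  | cons x b ih =>
    rcases x with _ | x
    · obtain _ | ⟨c, cs⟩ := cs
      · simp at h
      · simp [ih (by simpa using h)]
    · simp_all

theorem length_expand {cs b : List ℕ} (h : cs.length = b.count 0) :
    (expand cs b).length = b.length + cs.sum := by
  induction b generalizing cs with
  | nil => simp_all
  | cons x b ih =>
    rcases x with _ | x
    · obtain _ | ⟨c, cs⟩ := cs
      · simp at h
      · simp [ih (by simpa using h)]; omega
    · simp_all; omega

theorem head?_expand (cs b : List ℕ) : (expand cs b).head? = b.head?.map (· + 1) := by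
  rcases b with _ | ⟨_ | x, b⟩ <;> rfl

theorem noBigDescent_expand_iff (cs b : List ℕ) :
    NoBigDescent (expand cs b) ↔ NoBigDescent b := by
  induction b generalizing cs with
  | nil => simp [NoBigDescent]
  | cons x b ih =>
    rcases x with _ | x
    · simp [noBigDescent_cons, noBigDescent_replicate_zero_append, ih]
    · simp [noBigDescent_cons, head?_expand, ih]

def leadingZeros (l : List ℕ) : ℕ := (l.takeWhile (· == 0)).length

def zeroRuns : List ℕ → List ℕ
  | [] => []
  | 0 :: l => zeroRuns l
  | 1 :: l => leadingZeros l :: zeroRuns (l.dropWhile (· == 0))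
  | (_ + 2) :: l => zeroRuns l
  termination_by l => l.length
  decreasing_by
    all_goals simp only [length_cons]
    all_goals try omega
    have := (dropWhile_suffix (l := l) (· == 0)).length_le; omega

@[simp] theorem zeroRuns_nil : zeroRuns [] = [] := by rw [zeroRuns]

@[simp] theorem zeroRuns_zero_cons (l : List ℕ) : zeroRuns (0 :: l) = zeroRuns l := by
  rw [zeroRuns]

@[simp] theorem zeroRuns_one_cons (l : List ℕ) :
    zeroRuns (1 :: l) = leadingZeros l :: zeroRuns (l.dropWhile (· == 0)) := by
  rw [zeroRuns]

@[simp] theorem zeroRuns_add_two_cons (x : ℕ) (l : List ℕ) :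
    zeroRuns ((x + 2) :: l) = zeroRuns l := by
  rw [zeroRuns]

def assemble (c : ℕ) (cs b : List ℕ) : List ℕ := replicate c 0 ++ expand cs b

theorem takeWhile_eq_replicate_leadingZeros (l : List ℕ) :
    l.takeWhile (· == 0) = replicate (leadingZeros l) 0 :=
  eq_replicate_iff.2 ⟨rfl, fun _ h => by simpa using mem_takeWhile_imp h⟩

theorem replicate_leadingZeros_append_dropWhile (l : List ℕ) :
    replicate (leadingZeros l) 0 ++ l.dropWhile (· == 0) = l := by
  rw [← takeWhile_eq_replicate_leadingZeros, takeWhile_append_dropWhile]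

theorem leadingZeros_dropWhile (l : List ℕ) : leadingZeros (l.dropWhile (· == 0)) = 0 := by
  induction l with
  | nil => rfl
  | cons x l ih => rcases x with _ | x <;> simp_all [leadingZeros]

theorem takeWhile_expand (cs b : List ℕ) : (expand cs b).takeWhile (· == 0) = [] := by
  rcases b with _ | ⟨_ | x, b⟩ <;> simp

theorem dropWhile_expand (cs b : List ℕ) : (expand cs b).dropWhile (· == 0) = expand cs b := by
  rcases b with _ | ⟨_ | x, b⟩ <;> simp

@[simp] theorem zeroRuns_replicate_zero_append (q : ℕ) (r : List ℕ) :
    zeroRuns (replicate q 0 ++ r) = zeroRuns r := by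
  induction q with
  | zero => simp
  | succ q ih => rw [replicate_succ, cons_append, zeroRuns, ih]

theorem zeroRuns_expand {cs b : List ℕ} (h : cs.length = b.count 0) :
    zeroRuns (expand cs b) = cs := by
  induction b generalizing cs with
  | nil => simp_all
  | cons x b ih =>
    rcases x with _ | x
    · obtain _ | ⟨c, cs⟩ := cs
      · simp at h
      · simp [leadingZeros, takeWhile_expand, dropWhile_expand, ih (by simpa using h)]
    · simp_all

@[simp] theorem strip_assemble (c : ℕ) (cs b : List ℕ) : strip (assemble c cs b) = b := by
  simp [assemble]

theorem zeroRuns_assemble {c : ℕ} {cs b : List ℕ} (h : cs.length = b.count 0) :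
    zeroRuns (assemble c cs b) = cs := by
  simp [assemble, zeroRuns_expand h]

theorem count_zero_assemble {c : ℕ} {cs b : List ℕ} (h : cs.length = b.count 0) :
    (assemble c cs b).count 0 = c + cs.sum := by
  simp [assemble, count_zero_expand h]

theorem count_one_assemble (c : ℕ) (cs b : List ℕ) : (assemble c cs b).count 1 = b.count 0 := by
  simp [assemble, count_one_expand, count_replicate]

theorem length_assemble {c : ℕ} {cs b : List ℕ} (h : cs.length = b.count 0) :
    (assemble c cs b).length = c + b.length + cs.sum := by
  simp [assemble, length_expand h]; omega

theorem noBigDescent_assemble_iff (c : ℕ) (cs b : List ℕ) :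
    NoBigDescent (assemble c cs b) ↔ NoBigDescent b := by
  rw [assemble, noBigDescent_replicate_zero_append, noBigDescent_expand_iff]

theorem assemble_leadingZeros_zeroRuns_strip {l : List ℕ} (hl : NoBigDescent l) :
    assemble (leadingZeros l) (zeroRuns l) (strip l) = l := by
  induction l using zeroRuns.induct with
  | case1 => rfl
  | case2 l ih =>
    have := ih ((noBigDescent_cons _ _).1 hl).2
    simp_all [assemble, leadingZeros, replicate_succ]
  | case3 l ih =>
    have hd : NoBigDescent (l.dropWhile (· == 0)) :=
      IsChain.suffix hl ((dropWhile_suffix _).trans (suffix_cons 1 l))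
    have hs : strip l = strip (l.dropWhile (· == 0)) := by
      conv_lhs => rw [← replicate_leadingZeros_append_dropWhile l]
      simp
    have := ih hd
    rw [leadingZeros_dropWhile, assemble, replicate_zero, nil_append] at this
    simp only [assemble, zeroRuns_one_cons, strip_cons_succ, expand_zero_cons, headI, tail]
    rw [hs, this, replicate_leadingZeros_append_dropWhile]
    rfl
  | case4 x l ih =>
    have hl' := (noBigDescent_cons _ _).1 hl
    have hlz : leadingZeros l = 0 := by
      rcases l with _ | ⟨_ | y, t⟩
      · rfl
      · simp at hl'
      · simp [leadingZeros]
    have := ih hl'.2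
    rw [hlz, assemble, replicate_zero, nil_append] at this
    simp only [assemble, zeroRuns_add_two_cons, strip_cons_succ, expand_succ_cons, this]
    rfl

theorem length_zeroRuns (l : List ℕ) : (zeroRuns l).length = l.count 1 := by
  induction l using zeroRuns.induct with
  | case1 => simp
  | case2 l ih => simp [ih]
  | case3 l ih =>
    conv_rhs => rw [← replicate_leadingZeros_append_dropWhile l]
    simp [ih, count_replicate]
  | case4 x l ih => simp [ih]

theorem count_zero_strip (l : List ℕ) : (strip l).count 0 = l.count 1 := by
  induction l with
  | nil => rfl
  | cons x l ih => rcases x with _ | _ | x <;> simp [ih]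

theorem FirstOccFlanked.leadingZeros_pos {l : List ℕ} (hl : FirstOccFlanked l) (hne : l ≠ []) :
    0 < leadingZeros l := by
  obtain _ | ⟨_ | k, t⟩ := l
  · exact absurd rfl hne
  · simp [leadingZeros]
  · simpa using hl [] k t rfl (by simp)

theorem assemble_append_cons (c : ℕ) (cs u v : List ℕ) (x : ℕ) :
    assemble c cs (u ++ x :: v) =
      (replicate c 0 ++ expand cs u) ++ expand (cs.drop (u.count 0)) (x :: v) := by
  rw [assemble, expand_append, append_assoc]

theorem firstOccFlanked_assemble {c : ℕ} {cs b : List ℕ} (hb : FirstOccFlanked b)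
    (h : cs.length = b.count 0) (hc : 0 < c) (hcs : 0 < cs.sum) :
    FirstOccFlanked (assemble c cs b) := by
  intro p k s heq hp
  rcases k with _ | j
  -- The first `1` comes from the first `0` of `b`, and all `Σ cs` zeros of `expand` follow it.
  · obtain ⟨c₁, cs', rfl⟩ : ∃ c₁ cs', cs = c₁ :: cs' := by
      rcases cs with _ | ⟨c₁, cs'⟩
      · simp at hcs
      · exact ⟨c₁, cs', rfl⟩
    have hb0 : 0 ∈ b := count_pos_iff.1 (by simp [← h])
    obtain ⟨u, v, rfl, hu⟩ := exists_eq_append_cons_of_mem hb0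
    have hv : cs'.length = v.count 0 := by simpa [count_eq_zero.2 hu] using h
    have hsplit := assemble_append_cons c (c₁ :: cs') u v 0
    rw [count_eq_zero.2 hu, drop_zero, expand_zero_cons, heq] at hsplit
    obtain ⟨rfl, rfl⟩ := eq_of_append_cons_eq_of_notMem hsplit hp
      (by simp [mem_replicate, succ_mem_expand_iff, hu])
    constructor
    · simp [mem_replicate]; omega
    · rw [← count_pos_iff]
      simpa [count_replicate, count_zero_expand hv] using hcs
  · have hmem : j + 1 ∈ b := by
      have : j + 2 ∈ assemble c cs b := heq ▸ mem_append_right _ mem_cons_self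
      simpa [assemble, mem_replicate, succ_mem_expand_iff] using this
    obtain ⟨u, v, rfl, hu⟩ := exists_eq_append_cons_of_mem hmem
    obtain ⟨hju, hjv⟩ := hb u j v rfl hu
    have hsplit := assemble_append_cons c cs u v (j + 1)
    rw [heq, expand_succ_cons] at hsplit
    obtain ⟨rfl, rfl⟩ := eq_of_append_cons_eq_of_notMem hsplit hp
      (by simp [mem_replicate, succ_mem_expand_iff, hu])
    simp [succ_mem_expand_iff, hju, hjv]

theorem FirstOccFlanked.of_assemble {c : ℕ} {cs b : List ℕ}
    (h : FirstOccFlanked (assemble c cs b)) : FirstOccFlanked b := by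
  intro u k v hb hu
  have hsplit := assemble_append_cons c cs u v (k + 1)
  rw [← hb, expand_succ_cons] at hsplit
  have hnot : k + 2 ∉ replicate c 0 ++ expand cs u := by
    simp [mem_replicate, succ_mem_expand_iff, hu]
  obtain ⟨h₁, h₂⟩ := h _ (k + 1) _ hsplit hnot
  simp only [mem_append, mem_replicate, succ_mem_expand_iff] at h₁ h₂
  exact ⟨h₁.resolve_left (by omega), h₂⟩

theorem FirstOccFlanked.zero_mem_of_one_mem {c : ℕ} {r : List ℕ}
    (h : FirstOccFlanked (replicate c 0 ++ r)) (h1 : 1 ∈ r) : 0 ∈ r := by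
  obtain ⟨p, s, rfl, hp⟩ := exists_eq_append_cons_of_mem h1
  have := (h (replicate c 0 ++ p) 0 s (by simp) (by simp [mem_replicate, hp])).2
  simp [this]

def zeroRunChoices (m j : ℕ) : Set (List ℕ) :=
  {cs | cs.length = j ∧ 0 < cs.sum ∧ cs.sum < m}

def assembleWithZeros (m : ℕ) (x : List ℕ × List ℕ) : List ℕ := assemble (m - x.1.sum) x.1 x.2

theorem mapsTo_assembleWithZeros (N m j : ℕ) :
    Set.MapsTo (assembleWithZeros m)
      (zeroRunChoices m j ×ˢ catalanLists N j) (catalanListsWithOnes (N + m) m j) := by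
  rintro ⟨cs, b⟩ ⟨⟨hcs, hpos, hlt⟩, hb, hnd, hfo, hb0⟩
  dsimp only [assembleWithZeros] at hcs hpos hlt hb hb0 ⊢
  have h : cs.length = b.count 0 := hcs.trans hb0.symm
  refine ⟨⟨?_, ?_, ?_, ?_⟩, ?_⟩
  · simp only [length_assemble h]; omega
  · exact (noBigDescent_assemble_iff _ _ _).2 hnd
  · exact firstOccFlanked_assemble hfo h (by omega) hpos
  · simp only [count_zero_assemble h]; omega
  · simp only [count_one_assemble, hb0]

theorem injOn_assembleWithZeros (N m j : ℕ) :
    Set.InjOn (assembleWithZeros m) (zeroRunChoices m j ×ˢ catalanLists N j) := by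
  rintro ⟨cs, b⟩ ⟨⟨hcs, -⟩, -, -, -, hb0⟩ ⟨cs', b'⟩ ⟨⟨hcs', -⟩, -, -, -, hb0'⟩ he
  dsimp only [assembleWithZeros] at hcs hb0 hcs' hb0' he
  have h₁ := congrArg zeroRuns he
  have h₂ := congrArg strip he
  rw [zeroRuns_assemble (hcs.trans hb0.symm), zeroRuns_assemble (hcs'.trans hb0'.symm)] at h₁
  simp only [strip_assemble] at h₂
  rw [h₁, h₂]

theorem surjOn_assembleWithZeros {N m j : ℕ} (hj : 0 < j) :
    Set.SurjOn (assembleWithZeros m)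
      (zeroRunChoices m j ×ˢ catalanLists N j) (catalanListsWithOnes (N + m) m j) := by
  rintro l ⟨⟨hlen, hnd, hfo, h0⟩, h1⟩
  have hcs : (zeroRuns l).length = (strip l).count 0 := by
    rw [length_zeroRuns, count_zero_strip]
  have hc : 0 < leadingZeros l := hfo.leadingZeros_pos (by rintro rfl; simp at h1; omega)
  have he := assemble_leadingZeros_zeroRuns_strip hnd
  generalize leadingZeros l = c at hc he
  generalize zeroRuns l = cs at hcs he
  generalize strip l = b at hcs he
  subst he
  rw [count_zero_assemble hcs] at h0
  rw [length_assemble hcs] at hlen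
  rw [count_one_assemble] at h1
  -- `Σ cs > 0` because condition (ii) for the letter `1` puts a zero after the first `1`.
  have hpos : 0 < cs.sum := by
    rw [← count_zero_expand hcs, count_pos_iff]
    refine hfo.zero_mem_of_one_mem (count_pos_iff.1 ?_)
    rw [count_one_expand]; omega
  refine ⟨(cs, b), ⟨⟨hcs.trans h1, hpos, (by omega : cs.sum < m)⟩,
    (by omega : b.length = N), ?_, hfo.of_assemble, h1⟩, ?_⟩
  · exact (noBigDescent_assemble_iff _ _ _).1 hnd
  · rw [assembleWithZeros, ← h0, Nat.add_sub_cancel]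

theorem finite_length_eq_sum_le (j M : ℕ) :
    {cs : List ℕ | cs.length = j ∧ cs.sum ≤ M}.Finite :=
  (finite_length_eq_forall_lt j (M + 1)).subset fun _ ⟨hj, hM⟩ =>
    ⟨hj, fun _ hx => Nat.lt_succ_of_le ((le_sum_of_mem hx).trans hM)⟩

theorem ncard_length_eq_sum_le (j M : ℕ) :
    {cs : List ℕ | cs.length = j ∧ cs.sum ≤ M}.ncard = (M + j).choose j := by
  induction j generalizing M with
  | zero =>
    have : {cs : List ℕ | cs.length = 0 ∧ cs.sum ≤ M} = {[]} := by
      ext cs; simp +contextual [length_eq_zero_iff]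
    rw [this, Set.ncard_singleton, Nat.choose_zero_right]
  | succ j ih =>
    have hsplit : {cs : List ℕ | cs.length = j + 1 ∧ cs.sum ≤ M} =
        ⋃ x ∈ (Finset.range (M + 1) : Set ℕ),
          cons x '' {t : List ℕ | t.length = j ∧ t.sum ≤ M - x} := by
      ext cs
      rcases cs with _ | ⟨x, t⟩
      · simp
      · simp; omega
    rw [hsplit, Set.Finite.ncard_biUnion (Finset.finite_toSet _)
      (fun x _ => (finite_length_eq_sum_le j (M - x)).image _), finsum_mem_coe_finset]
    · calc ∑ x ∈ Finset.range (M + 1),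
            (cons x '' {t : List ℕ | t.length = j ∧ t.sum ≤ M - x}).ncard
          = ∑ x ∈ Finset.range (M + 1), (M - x + j).choose j := by
            simp only [Set.ncard_image_of_injective _ cons_injective, ih]
        _ = ∑ x ∈ Finset.range (M + 1), (x + j).choose j := by
            rw [← Finset.sum_range_reflect]
            refine Finset.sum_congr rfl fun x hx => ?_
            rw [Finset.mem_range] at hx
            congr 2; omega
        _ = (M + (j + 1)).choose (j + 1) := by rw [Nat.sum_range_add_choose, Nat.add_assoc]
    · intro x _ y _ hxy
      refine Set.disjoint_left.2 ?_
      rintro _ ⟨t, -, rfl⟩ ⟨t', -, h⟩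
      exact hxy (cons_eq_cons.1 h).1.symm

theorem ncard_zeroRunChoices {m : ℕ} (hm : 0 < m) (j : ℕ) :
    (zeroRunChoices m j).ncard = (j + m - 1).choose j - 1 := by
  have : zeroRunChoices m j =
      {cs : List ℕ | cs.length = j ∧ cs.sum ≤ m - 1} \ {replicate j 0} := by
    ext cs
    simp only [zeroRunChoices, Set.mem_ofPred_eq, Set.mem_sdiff, Set.mem_singleton_iff]
    constructor
    · rintro ⟨hj, hpos, hlt⟩
      refine ⟨⟨hj, by omega⟩, ?_⟩
      rintro rfl
      simp at hpos
    · rintro ⟨⟨hj, hle⟩, hne⟩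
      refine ⟨hj, Nat.pos_of_ne_zero fun h0 => hne ?_, by omega⟩
      exact eq_replicate_iff.2 ⟨hj, fun x hx => List.sum_eq_zero_iff_forall_eq_nat.1 h0 x hx⟩
  rw [this, Set.ncard_sdiff_singleton_of_mem (by simp),
    ncard_length_eq_sum_le, show m - 1 + j = j + m - 1 by omega]

theorem ncard_catalanListsWithOnes {N m j : ℕ} (hm : 0 < m) (hj : 0 < j) :
    (catalanListsWithOnes (N + m) m j).ncard =
      ((j + m - 1).choose j - 1) * (catalanLists N j).ncard := by
  have hbij : Set.BijOn (assembleWithZeros m) (zeroRunChoices m j ×ˢ catalanLists N j)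
      (catalanListsWithOnes (N + m) m j) :=
    ⟨mapsTo_assembleWithZeros N m j, injOn_assembleWithZeros N m j, surjOn_assembleWithZeros hj⟩
  rw [← hbij.image_eq, hbij.injOn.ncard_image, Set.ncard_prod, ncard_zeroRunChoices hm]

end CatalanList


/-- Recurrence for the numbers `a(n,m)`, together with `a(n,n) = 1` for `n ≥ 1`. -/
theorem aZ_recurrence :
    (∀ n m : ℕ, 2 ≤ n → 1 ≤ m → m ≤ n - 1 →
      aZ n m = ∑ j ∈ Finset.Icc 1 (n - m), (Nat.choose (j + m - 1) j - 1) * aZ (n - m) j) ∧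
    (∀ n : ℕ, 1 ≤ n → aZ n n = 1) := by
  refine ⟨fun n m _ hm hmn => ?_, fun n _ => ?_⟩
  · obtain ⟨N, rfl⟩ : ∃ N, n = N + m := ⟨n - m, by omega⟩
    rw [CatalanList.aZ_eq_ncard_catalanLists, CatalanList.ncard_catalanLists_eq_sum (by omega)]
    refine Finset.sum_congr rfl fun j hj => ?_
    rw [CatalanList.ncard_catalanListsWithOnes hm (Finset.mem_Icc.1 hj).1, Nat.add_sub_cancel,
      CatalanList.aZ_eq_ncard_catalanLists]
  · rw [CatalanList.aZ_eq_ncard_catalanLists, CatalanList.catalanLists_self, Set.ncard_singleton]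
end

section
/- For n ≥ 3, 1 ≤ m ≤ n−2 and 2 ≤ i ≤ n−m, the number of members of 𝓛_n containing exactly m letters equal to 1 and exactly i letters equal to 0 equals (binomial(i+m−1, m) − 1)·a(n−i, m). -/
/-!
Pass from tuples to lists. A list satisfying condition (i) factors uniquely as
`replicate c 0 ++ raise cs b`: `b` is obtained by deleting all zeros after the leading run and
lowering the other letters by one, and `cs` records the runs of zeros following the ones. Such a
list is Catalan iff `b` is, and, when `b` contains a zero, the first `1` is flanked by zeros, i.e.
`c ≠ 0` and `cs.sum ≠ 0`. Its ones are the zeros of `b` and it has `c + cs.sum` zeros, so a word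
with `m ≥ 1` ones and `i` zeros amounts to a Catalan word of length `n - i` with `m` zeros together
with a pair `(c, cs)` as above with `c + cs.sum = i`; stars and bars counts the latter as
`choose (i + m - 1) m - 1`.
-/

namespace CatalanWords

open List

section Splitting

variable {α : Type*}

lemma exists_eq_append_cons_notMem {x : α} {l : List α} (h : x ∈ l) :
    ∃ u v, l = u ++ x :: v ∧ x ∉ u := by
  induction l with
  | nil => simp at h
  | cons a t ih =>
    by_cases hax : a = x
    · exact ⟨[], t, by simp [hax], by simp⟩
    · obtain ⟨u, v, rfl, hu⟩ := ih ((mem_cons.mp h).resolve_left (Ne.symm hax))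
      exact ⟨a :: u, v, rfl, by simp [hu, Ne.symm hax]⟩

lemma eq_of_append_cons_eq_of_notMem [DecidableEq α] {x : α} {u₁ u₂ v₁ v₂ : List α}
    (h : u₁ ++ x :: v₁ = u₂ ++ x :: v₂) (h₁ : x ∉ u₁) (h₂ : x ∉ u₂) : u₁ = u₂ ∧ v₁ = v₂ := by
  have hlen : u₁.length = u₂.length := by
    simpa [idxOf_append_of_notMem h₁, idxOf_append_of_notMem h₂] using congrArg (idxOf x) h
  obtain ⟨hu, hv⟩ := append_inj h hlen
  exact ⟨hu, (cons.inj hv).2⟩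

lemma forall_eq_append_cons_notMem_iff [DecidableEq α] {x : α} {l u₀ v₀ : List α}
    {P : List α → List α → Prop} (h : l = u₀ ++ x :: v₀) (hx : x ∉ u₀) :
    (∀ u v, l = u ++ x :: v → x ∉ u → P u v) ↔ P u₀ v₀ := by
  refine ⟨fun H => H _ _ h hx, fun H u v h' hu => ?_⟩
  obtain ⟨rfl, rfl⟩ := eq_of_append_cons_eq_of_notMem (h.symm.trans h') hx hu
  exact H

lemma forall_eq_append_cons_iff {l : List α} {P : List α → α → List α → Prop} :
    (∀ u x v, l = u ++ x :: v → P u x v) ↔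
      ∀ i (h : i < l.length), P (l.take i) l[i] (l.drop (i + 1)) := by
  refine ⟨fun H i h => H _ _ _ ?_, fun H u x v hl => ?_⟩
  · rw [← drop_eq_getElem_cons, take_append_drop]
  · subst hl
    simpa using H u.length (by simp)

lemma replicate_append_inj {x : α} : ∀ {a a' : ℕ} {A A' : List α}, A.head? ≠ some x →
    A'.head? ≠ some x → replicate a x ++ A = replicate a' x ++ A' → a = a' ∧ A = A'
  | 0, 0, _, _, _, _, h => ⟨rfl, h⟩
  | 0, _ + 1, _, _, hA, _, h => by
    rw [replicate_zero, nil_append] at h; simp [h, replicate_succ] at hA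
  | _ + 1, 0, _, _, _, hA', h => by
    rw [replicate_zero, nil_append] at h; simp [← h, replicate_succ] at hA'
  | _ + 1, _ + 1, _, _, hA, hA', h => by
    obtain ⟨rfl, rfl⟩ := replicate_append_inj hA hA' (by simpa [replicate_succ] using h)
    exact ⟨rfl, rfl⟩

end Splitting

def DropsByAtMostOne (l : List ℕ) : Prop := l.IsChain (fun x y => x ≤ y + 1)

def FlankedAt (l : List ℕ) (k : ℕ) : Prop :=
  ∀ u v, l = u ++ (k + 1) :: v → k + 1 ∉ u → k ∈ u ∧ k ∈ v

def IsCatalan (l : List ℕ) : Prop := DropsByAtMostOne l ∧ ∀ k, FlankedAt l k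

/-- `raise cs b` adds one to every letter of `b` and inserts `cs[j]` zeros right after the `1`
coming from the `j`-th zero of `b`. -/
def raise : List ℕ → List ℕ → List ℕ
  | _, [] => []
  | cs, 0 :: b => 1 :: (replicate cs.headI 0 ++ raise cs.tail b)
  | cs, (x + 1) :: b => (x + 2) :: raise cs b

section Raise

variable {cs b : List ℕ}

@[simp] lemma raise_nil (cs : List ℕ) : raise cs [] = [] := rfl

@[simp] lemma raise_zero_cons (cs b : List ℕ) :
    raise cs (0 :: b) = 1 :: (replicate cs.headI 0 ++ raise cs.tail b) := rfl

@[simp] lemma raise_succ_cons (cs b : List ℕ) (x : ℕ) :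
    raise cs ((x + 1) :: b) = (x + 2) :: raise cs b := rfl

lemma head?_raise (cs b : List ℕ) : (raise cs b).head? = b.head?.map (· + 1) := by
  rcases b with _ | ⟨_ | x, b⟩ <;> rfl

lemma succ_mem_raise {k : ℕ} : k + 1 ∈ raise cs b ↔ k ∈ b := by
  induction b generalizing cs with
  | nil => simp
  | cons x b ih =>
    rcases x with _ | x
    · simp [ih, eq_comm]
    · simp [ih]

lemma zero_notMem_raise (h : 0 ∉ b) : 0 ∉ raise cs b := by
  induction b generalizing cs with
  | nil => simp
  | cons x b ih =>
    rcases x with _ | x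
    · simp at h
    · simp_all

lemma raise_append (cs u v : List ℕ) :
    raise cs (u ++ v) = raise cs u ++ raise (cs.drop (u.count 0)) v := by
  induction u generalizing cs with
  | nil => simp
  | cons x u ih =>
    rcases x with _ | x
    · simp [ih]
    · simp [ih]

lemma eq_cons_of_length_eq_count_zero_cons {u : List ℕ} (h : cs.length = (0 :: u).count 0) :
    ∃ c cs', cs = c :: cs' ∧ cs'.length = u.count 0 := by
  rcases cs with _ | ⟨c, cs'⟩
  · simp at h
  · exact ⟨c, cs', rfl, by simpa using h⟩

lemma length_raise (h : cs.length = b.count 0) : (raise cs b).length = b.length + cs.sum := by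
  induction b generalizing cs with
  | nil => simp_all
  | cons x b ih =>
    rcases x with _ | x
    · obtain ⟨c, cs', rfl, h'⟩ := eq_cons_of_length_eq_count_zero_cons h
      simp [ih h']
      omega
    · simp [ih (by simpa using h)]
      omega

lemma count_zero_raise (h : cs.length = b.count 0) : (raise cs b).count 0 = cs.sum := by
  induction b generalizing cs with
  | nil => simp_all
  | cons x b ih =>
    rcases x with _ | x
    · obtain ⟨c, cs', rfl, h'⟩ := eq_cons_of_length_eq_count_zero_cons h
      simp [ih h']
    · simp_all

lemma count_one_raise (cs b : List ℕ) : (raise cs b).count 1 = b.count 0 := by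
  induction b generalizing cs with
  | nil => simp
  | cons x b ih =>
    rcases x with _ | x
    · simp [ih, count_replicate]
    · simp [ih]

lemma zero_mem_raise_iff (h : cs.length = b.count 0) : 0 ∈ raise cs b ↔ cs.sum ≠ 0 := by
  rw [← count_pos_iff, count_zero_raise h, Nat.pos_iff_ne_zero]

lemma dropsByAtMostOne_cons {x : ℕ} {l : List ℕ} :
    DropsByAtMostOne (x :: l) ↔ (∀ y ∈ l.head?, x ≤ y + 1) ∧ DropsByAtMostOne l :=
  isChain_cons

lemma dropsByAtMostOne_replicate_zero_append_iff {c : ℕ} {l : List ℕ} :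
    DropsByAtMostOne (replicate c 0 ++ l) ↔ DropsByAtMostOne l := by
  induction c with
  | zero => simp
  | succ c ih =>
    rw [replicate_succ, cons_append, dropsByAtMostOne_cons]
    exact ⟨fun h => ih.mp h.2, fun h => ⟨fun _ _ => by omega, ih.mpr h⟩⟩

lemma dropsByAtMostOne_raise_iff : DropsByAtMostOne (raise cs b) ↔ DropsByAtMostOne b := by
  induction b generalizing cs with
  | nil => simp [DropsByAtMostOne]
  | cons x b ih =>
    rcases x with _ | x
    · simp [dropsByAtMostOne_cons, dropsByAtMostOne_replicate_zero_append_iff, ih]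
    · simp [dropsByAtMostOne_cons, ih, head?_raise]

lemma head?_raise_ne_zero (cs b : List ℕ) : (raise cs b).head? ≠ some 0 := by
  simp [head?_raise]

lemma head?_eq_of_raise_eq {cs' b' : List ℕ} (heq : raise cs b = raise cs' b') :
    b.head? = b'.head? :=
  Option.map_injective (add_left_injective 1) (by simpa [head?_raise] using congrArg head? heq)

lemma raise_inj {cs' b' : List ℕ} (h : cs.length = b.count 0) (h' : cs'.length = b'.count 0)
    (heq : raise cs b = raise cs' b') : cs = cs' ∧ b = b' := by
  induction b generalizing cs cs' b' with
  | nil =>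
    obtain rfl : b' = [] := by simpa using (head?_eq_of_raise_eq heq).symm
    simp_all
  | cons x b ih =>
    obtain ⟨b', rfl⟩ : ∃ t, b' = x :: t := by
      have hhead := head?_eq_of_raise_eq heq
      rcases b' with _ | ⟨y, t⟩ <;> simp only [head?_cons, head?_nil, reduceCtorEq,
        Option.some.injEq] at hhead
      exact ⟨t, by rw [hhead]⟩
    rcases x with _ | x
    · obtain ⟨c, cs₁, rfl, h₁⟩ := eq_cons_of_length_eq_count_zero_cons h
      obtain ⟨c', cs₁', rfl, h₁'⟩ := eq_cons_of_length_eq_count_zero_cons h'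
      simp only [raise_zero_cons, headI_cons, tail_cons, cons.injEq, true_and] at heq
      obtain ⟨rfl, hrest⟩ := replicate_append_inj (head?_raise_ne_zero _ _)
        (head?_raise_ne_zero _ _) heq
      obtain ⟨rfl, rfl⟩ := ih h₁ h₁' hrest
      exact ⟨rfl, rfl⟩
    · simp only [raise_succ_cons, cons.injEq, true_and] at heq
      obtain ⟨rfl, rfl⟩ := ih (by simpa using h) (by simpa using h') heq
      exact ⟨rfl, rfl⟩

end Raise

lemma exists_eq_replicate_append_raise {l : List ℕ} (hl : DropsByAtMostOne l) :
    ∃ c cs b, cs.length = b.count 0 ∧ l = replicate c 0 ++ raise cs b := by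
  induction l with
  | nil => exact ⟨0, [], [], rfl, rfl⟩
  | cons x l ih =>
    rw [dropsByAtMostOne_cons] at hl
    obtain ⟨c, cs, b, hlen, rfl⟩ := ih hl.2
    rcases x with _ | _ | x
    · exact ⟨c + 1, cs, b, hlen, rfl⟩
    · exact ⟨0, c :: cs, 0 :: b, by simpa using hlen, rfl⟩
    · obtain rfl : c = 0 := by
        rcases c with _ | c
        · rfl
        · simpa [replicate_succ] using hl.1
      exact ⟨0, cs, (x + 1) :: b, by simpa using hlen, rfl⟩

section Flanked

variable {c k : ℕ} {cs b : List ℕ}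

lemma flankedAt_of_notMem {l : List ℕ} (h : k + 1 ∉ l) : FlankedAt l k :=
  fun _ _ hl _ => absurd (hl ▸ mem_append_cons_self) h

lemma flankedAt_iff {l u v : List ℕ} (hl : l = u ++ (k + 1) :: v) (hu : k + 1 ∉ u) :
    FlankedAt l k ↔ k ∈ u ∧ k ∈ v :=
  forall_eq_append_cons_notMem_iff hl hu

lemma flankedAt_succ_replicate_append_raise_iff :
    FlankedAt (replicate c 0 ++ raise cs b) (k + 1) ↔ FlankedAt b k := by
  by_cases hk : k + 1 ∈ b
  · obtain ⟨u, v, rfl, hu⟩ := exists_eq_append_cons_notMem hk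
    have hsplit : replicate c 0 ++ raise cs (u ++ (k + 1) :: v) =
        (replicate c 0 ++ raise cs u) ++ (k + 1 + 1) :: raise (cs.drop (u.count 0)) v := by
      simp [raise_append]
    rw [flankedAt_iff hsplit (by simp [succ_mem_raise, hu]), flankedAt_iff rfl hu]
    simp [succ_mem_raise]
  · exact iff_of_true (flankedAt_of_notMem (by simp [succ_mem_raise, hk]))
      (flankedAt_of_notMem hk)

lemma flankedAt_zero_replicate_append_raise_iff (hlen : cs.length = b.count 0) :
    FlankedAt (replicate c 0 ++ raise cs b) 0 ↔ (0 ∈ b → c ≠ 0 ∧ cs.sum ≠ 0) := by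
  by_cases h0 : 0 ∈ b
  · obtain ⟨u, v, rfl, hu⟩ := exists_eq_append_cons_notMem h0
    have hu0 : u.count 0 = 0 := count_eq_zero.mpr hu
    obtain ⟨c₁, cs', rfl, hlen'⟩ := eq_cons_of_length_eq_count_zero_cons
      (show cs.length = (0 :: v).count 0 by simpa [hu0] using hlen)
    have hsplit : replicate c 0 ++ raise (c₁ :: cs') (u ++ 0 :: v) =
        (replicate c 0 ++ raise (c₁ :: cs') u) ++ (0 + 1) :: (replicate c₁ 0 ++ raise cs' v) := by
      simp [raise_append, hu0]
    rw [flankedAt_iff hsplit (by simp [succ_mem_raise, hu])]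
    simp [zero_notMem_raise hu, zero_mem_raise_iff hlen', h0]
    omega
  · exact iff_of_true (flankedAt_of_notMem (by simp [succ_mem_raise, h0])) (absurd · h0)

lemma isCatalan_replicate_append_raise_iff (hlen : cs.length = b.count 0) :
    IsCatalan (replicate c 0 ++ raise cs b) ↔ IsCatalan b ∧ (0 ∈ b → c ≠ 0 ∧ cs.sum ≠ 0) := by
  rw [IsCatalan, IsCatalan, dropsByAtMostOne_replicate_zero_append_iff,
    dropsByAtMostOne_raise_iff, ← Nat.and_forall_add_one,
    flankedAt_zero_replicate_append_raise_iff hlen]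
  simp only [flankedAt_succ_replicate_append_raise_iff]
  tauto

end Flanked

section OfFn

variable {α : Type*}

lemma mem_take_ofFn {n : ℕ} {a : Fin n → α} {i : Fin n} {x : α} :
    x ∈ (ofFn a).take i ↔ ∃ j < i, a j = x := by
  simp only [mem_take_iff_getElem, length_ofFn, List.getElem_ofFn, Fin.lt_def]
  constructor
  · rintro ⟨j, hj, rfl⟩
    exact ⟨⟨j, by omega⟩, by simp; omega, rfl⟩
  · rintro ⟨j, hj, rfl⟩
    exact ⟨j, by omega, rfl⟩

lemma mem_drop_ofFn {n : ℕ} {a : Fin n → α} {i : Fin n} {x : α} :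
    x ∈ (ofFn a).drop (i + 1) ↔ ∃ j, i < j ∧ a j = x := by
  simp only [mem_drop_iff_getElem, length_ofFn, List.getElem_ofFn, Fin.lt_def]
  constructor
  · rintro ⟨j, hj, rfl⟩
    exact ⟨⟨i + 1 + j, by omega⟩, by simp; omega, rfl⟩
  · rintro ⟨j, hj, rfl⟩
    exact ⟨j - (i + 1), by omega, congrArg a (Fin.ext (by simp; omega))⟩

end OfFn

lemma forall_flankedAt_iff {l : List ℕ} : (∀ k, FlankedAt l k) ↔
    ∀ i (h : i < l.length) k, l[i] = k + 1 → k + 1 ∉ l.take i →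
      k ∈ l.take i ∧ k ∈ l.drop (i + 1) := by
  rw [← forall_eq_append_cons_iff (P := fun u x v => ∀ k, x = k + 1 → k + 1 ∉ u → k ∈ u ∧ k ∈ v)]
  exact ⟨fun H u x v hl k hx => H k u v (hx ▸ hl), fun H k u v hl => H u _ v hl k rfl⟩

lemma forall_flankedAt_ofFn_iff {n : ℕ} (a : Fin n → ℕ) : (∀ k, FlankedAt (ofFn a) k) ↔
    ∀ i : Fin n, 0 < a i → (∀ j : Fin n, a j = a i → i ≤ j) →
      (∃ i₁ : Fin n, i₁ < i ∧ a i₁ + 1 = a i) ∧ (∃ i₂ : Fin n, i < i₂ ∧ a i₂ + 1 = a i) := by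
  have key : ∀ i : Fin n, (∀ k, a i = k + 1 → k + 1 ∉ (ofFn a).take i →
      k ∈ (ofFn a).take i ∧ k ∈ (ofFn a).drop (i + 1)) ↔
      (0 < a i → (∀ j : Fin n, a j = a i → i ≤ j) →
        (∃ i₁ : Fin n, i₁ < i ∧ a i₁ + 1 = a i) ∧ (∃ i₂ : Fin n, i < i₂ ∧ a i₂ + 1 = a i)) := by
    intro i
    simp only [mem_take_ofFn, mem_drop_ofFn]
    rcases h : a i with _ | k
    · simp
    · have hfirst : (∀ j < i, a j ≠ k + 1) ↔ ∀ j, a j = k + 1 → i ≤ j :=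
        ⟨fun H j hj => not_lt.mp (H j · hj), fun H j hj hj' => (H j hj').not_gt hj⟩
      simp [hfirst]
  rw [forall_flankedAt_iff]
  exact ⟨fun H i => (key i).mp (by simpa using H i (by simp)),
    fun H i hi => by simpa using (key ⟨i, by simpa using hi⟩).mpr (H _)⟩

lemma isCatalanWord_iff {n : ℕ} (a : Fin n → ℕ) : IsCatalanWord a ↔ IsCatalan (ofFn a) := by
  rw [IsCatalanWord, IsCatalan, forall_flankedAt_ofFn_iff, DropsByAtMostOne, isChain_iff_getElem]
  simp only [length_ofFn, List.getElem_ofFn]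

lemma countEq_eq_count {n : ℕ} (a : Fin n → ℕ) (c : ℕ) : countEq a c = (ofFn a).count c := by
  rw [countEq, ← Multiset.coe_count, ← Fin.univ_val_map, Multiset.count_map,
    Set.ncard_eq_toFinset_card', Set.toFinset_ofPred, Finset.card_def, Finset.filter_val]
  simp only [eq_comm]

lemma ncard_isCatalanWord_eq {n : ℕ} (Q : List ℕ → Prop) :
    {a : Fin n → ℕ | IsCatalanWord a ∧ Q (ofFn a)}.ncard =
      {l : List ℕ | IsCatalan l ∧ l.length = n ∧ Q l}.ncard := by
  have himage : {l : List ℕ | IsCatalan l ∧ l.length = n ∧ Q l} =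
      ofFn '' {a : Fin n → ℕ | IsCatalanWord a ∧ Q (ofFn a)} := by
    ext l
    simp only [Set.mem_image, Set.mem_ofPred_eq, isCatalanWord_iff]
    constructor
    · rintro ⟨hl, rfl, hQ⟩
      exact ⟨_, ⟨by rwa [ofFn_getElem], by rwa [ofFn_getElem]⟩, ofFn_getElem⟩
    · rintro ⟨a, ⟨ha, hQ⟩, rfl⟩
      exact ⟨ha, length_ofFn, hQ⟩
  rw [himage, Set.ncard_image_of_injective _ ofFn_injective]

def boundedLists : ℕ → ℕ → Finset (List ℕ)
  | 0, _ => {[]}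
  | m + 1, N => (Finset.range (N + 1)).biUnion fun c => (boundedLists m (N - c)).image (c :: ·)

lemma mem_boundedLists {m N : ℕ} {cs : List ℕ} :
    cs ∈ boundedLists m N ↔ cs.length = m ∧ cs.sum ≤ N := by
  induction m generalizing N cs with
  | zero => cases cs <;> simp [boundedLists]
  | succ m ih =>
    rcases cs with _ | ⟨c, cs⟩
    · simp [boundedLists]
    · simp [boundedLists, ih]
      omega

lemma card_boundedLists (m N : ℕ) : (boundedLists m N).card = (N + m).choose m := by
  induction m generalizing N with
  | zero => simp [boundedLists]
  | succ m ih =>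
    rw [boundedLists, Finset.card_biUnion]
    · calc ∑ c ∈ Finset.range (N + 1), ((boundedLists m (N - c)).image (c :: ·)).card
          = ∑ c ∈ Finset.range (N + 1), (N - c + m).choose m :=
            Finset.sum_congr rfl fun c _ => by
              rw [Finset.card_image_of_injective _ cons_injective, ih]
        _ = ∑ c ∈ Finset.range (N + 1), (c + m).choose m := by
            rw [← Finset.sum_range_reflect]
            exact Finset.sum_congr rfl fun c hc => by rw [Finset.mem_range] at hc; congr 2; omega
        _ = (N + (m + 1)).choose (m + 1) := Nat.sum_range_add_choose N m
    · intro c₁ _ c₂ _ hne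
      simp only [Function.onFun, Finset.disjoint_left, Finset.mem_image]
      rintro _ ⟨_, _, rfl⟩ ⟨_, _, h⟩
      exact hne (cons.inj h).1.symm

/-- The possible pairs `(c, cs)` of a leading run of `c` zeros and the zero runs `cs` after the
`m` ones in a Catalan word with `i` zeros. -/
def zeroRuns (m i : ℕ) : Set (ℕ × List ℕ) :=
  {p | p.1 ≠ 0 ∧ p.2.sum ≠ 0 ∧ p.2.length = m ∧ p.1 + p.2.sum = i}

lemma ncard_zeroRuns (m i : ℕ) : (zeroRuns m i).ncard = (i + m - 1).choose m - 1 := by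
  rcases i with _ | N
  · rw [show zeroRuns m 0 = ∅ by ext p; simp [zeroRuns]; omega, Set.ncard_empty]
    rcases m with _ | m <;> simp
  · have himage : zeroRuns m (N + 1) =
        (fun cs => (N + 1 - cs.sum, cs)) '' (↑(boundedLists m N) \ {replicate m 0}) := by
      ext ⟨c, cs⟩
      simp only [zeroRuns, Set.mem_ofPred_eq, Set.mem_image, Set.mem_sdiff, Finset.mem_coe,
        mem_boundedLists, Set.mem_singleton_iff, Prod.mk.injEq]
      constructor
      · rintro ⟨hc, hs, hl, hi⟩
        exact ⟨cs, ⟨⟨hl, by omega⟩, fun h => hs (by simp [h])⟩, by omega, rfl⟩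
      · rintro ⟨cs, ⟨⟨hl, hle⟩, hne⟩, rfl, rfl⟩
        have hs : cs.sum ≠ 0 := fun hs =>
          hne (eq_replicate_iff.mpr ⟨hl, fun x hx => sum_eq_zero_iff.mp hs x hx⟩)
        exact ⟨by omega, hs, hl, by omega⟩
    rw [himage, Set.ncard_image_of_injective _ fun _ _ h => (Prod.ext_iff.mp h).2,
      Set.ncard_sdiff_singleton_of_mem (by simp [mem_boundedLists]), Set.ncard_coe_finset,
      card_boundedLists]
    simp

lemma injOn_replicate_append_raise :
    Set.InjOn (fun q : (ℕ × List ℕ) × List ℕ => replicate q.1.1 0 ++ raise q.1.2 q.2)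
      {q | q.1.2.length = q.2.count 0} := by
  rintro ⟨⟨c, cs⟩, b⟩ hlen ⟨⟨c', cs'⟩, b'⟩ hlen' heq
  obtain ⟨rfl, hraise⟩ :=
    replicate_append_inj (head?_raise_ne_zero _ _) (head?_raise_ne_zero _ _) heq
  obtain ⟨rfl, rfl⟩ := raise_inj hlen hlen' hraise
  rfl

lemma ncard_isCatalan_count_one_count_zero {n m i : ℕ} (hm : 1 ≤ m) :
    {l : List ℕ | IsCatalan l ∧ l.length = n ∧ l.count 1 = m ∧ l.count 0 = i}.ncard =
      (zeroRuns m i).ncard *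
        {b : List ℕ | IsCatalan b ∧ b.length = n - i ∧ b.count 0 = m}.ncard := by
  set B := {b : List ℕ | IsCatalan b ∧ b.length = n - i ∧ b.count 0 = m}
  have himage : {l : List ℕ | IsCatalan l ∧ l.length = n ∧ l.count 1 = m ∧ l.count 0 = i} =
      (fun q : (ℕ × List ℕ) × List ℕ => replicate q.1.1 0 ++ raise q.1.2 q.2) ''
        (zeroRuns m i ×ˢ B) := by
    ext l
    simp only [Set.mem_ofPred_eq, Set.mem_image, Set.mem_prod, Prod.exists, zeroRuns, B]
    constructor
    · rintro ⟨hl, hn, h1, h0⟩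
      obtain ⟨c, cs, b, hlen, rfl⟩ := exists_eq_replicate_append_raise hl.1
      rw [isCatalan_replicate_append_raise_iff hlen] at hl
      simp [length_raise hlen, count_replicate, count_zero_raise hlen, count_one_raise] at hn h1 h0
      obtain ⟨hc, hs⟩ := hl.2 (count_pos_iff.mp (by omega))
      exact ⟨c, cs, b, ⟨⟨hc, hs, by omega, by omega⟩, hl.1, by omega, by omega⟩, rfl⟩
    · rintro ⟨c, cs, b, ⟨⟨hc, hs, hcs, hi⟩, hb, hbn, hbm⟩, rfl⟩
      have hlen : cs.length = b.count 0 := hcs.trans hbm.symm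
      have hin : i < n := by have := b.count_le_length (a := 0); omega
      refine ⟨(isCatalan_replicate_append_raise_iff hlen).mpr ⟨hb, fun _ => ⟨hc, hs⟩⟩,
        ?_, ?_, ?_⟩ <;>
        simp [length_raise hlen, count_zero_raise hlen, count_one_raise, count_replicate] <;> omega
  have hinj := injOn_replicate_append_raise.mono fun q (hq : q ∈ zeroRuns m i ×ˢ B) =>
    show q.1.2.length = q.2.count 0 from hq.1.2.2.1.trans hq.2.2.2.symm
  rw [himage, hinj.ncard_image, Set.ncard_prod]

end CatalanWords

open CatalanWords

theorem count_ones_zeros_general (n m i : ℕ) (hm1 : 1 ≤ m) :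
    Set.ncard {a : Fin n → ℕ | IsCatalanWord a ∧ countEq a 1 = m ∧ countEq a 0 = i} =
      (Nat.choose (i + m - 1) m - 1) * aZ (n - i) m := by
  simp only [aZ, countEq_eq_count]
  rw [ncard_isCatalanWord_eq (fun l => l.count 1 = m ∧ l.count 0 = i),
    ncard_isCatalanWord_eq (fun l => l.count 0 = m), ncard_isCatalan_count_one_count_zero hm1,
    ncard_zeroRuns]

/-- The number of Catalan words of length `n` with exactly `m` ones and `i` zeros equals
`(choose (i+m-1) m - 1) * a (n-i) m`. -/
theorem count_ones_zeros (n m i : ℕ) (hn : 3 ≤ n) (hm1 : 1 ≤ m) (hm2 : m ≤ n - 2)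
    (hi1 : 2 ≤ i) (hi2 : i ≤ n - m) :
    Set.ncard {a : Fin n → ℕ | IsCatalanWord a ∧ countEq a 1 = m ∧ countEq a 0 = i} =
      (Nat.choose (i + m - 1) m - 1) * aZ (n - i) m :=
  count_ones_zeros_general n m i hm1
end

section
/- For every real x with 0 < x < 1/4, setting t = 1/(2√x), the series Σ_{j≥1} 1/(√x·U_j(t)·U_{j+1}(t)) converges and equals x·C(x)^2. -/
/-- `C(x) = (1 - √(1-4x))/(2x)`, the generating function of the Catalan numbers. -/
noncomputable def Cfun (x : ℝ) : ℝ := (1 - Real.sqrt (1 - 4*x)) / (2*x)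

/-- Evaluation at `t` of the `n`-th Chebyshev polynomial of the second kind, with the
index extended to all integers by the recurrence `U n = 2x·U (n-1) - U (n-2)`
(so `U (-1) = 0`, `U (-2) = -1`). -/
noncomputable def chebU (n : ℤ) (t : ℝ) : ℝ := (Polynomial.Chebyshev.U ℝ n).eval t

/-!
Since `U_{n+1}² - U_n U_{n+2} = 1`, the terms telescope:
`1 / (U_{n+1} U_{n+2}) = U_{n+1} / U_{n+2} - U_n / U_{n+1}`, so the series sums to
`lim U_n / U_{n+1} - U_0 / U_1`. Because `C = C(x)` solves `x C² - C + 1 = 0`, the number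
`r = √x C ∈ (0, 1)` satisfies `r + r⁻¹ = 1 / √x`, i.e. `t = 1 / (2√x) = cosh θ` with `r = e^{-θ}`.
From `U_n(cosh θ) sinh θ = sinh((n+1)θ)` the ratios `U_n / U_{n+1}` tend to `e^{-θ} = r`, and the sum
is `(r - √x) / √x = C - 1 = x C²`.
-/

open Filter Topology Real

theorem Real.tendsto_sinh_div_sinh_add_atTop (θ : ℝ) :
    Tendsto (fun a => sinh a / sinh (a + θ)) atTop (𝓝 (exp (-θ))) := by
  have hform : ∀ a, sinh a / sinh (a + θ) =
      (1 - exp (-a) ^ 2) / (exp θ - exp (-a) ^ 2 * exp (-θ)) := by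
    intro a
    rw [← mul_div_mul_left (sinh a) _ (by positivity : 2 * exp (-a) ≠ 0), sinh_eq, sinh_eq]
    congr 1
    · rw [exp_neg]; field_simp
    · rw [exp_neg, exp_neg, exp_neg, exp_add]; field_simp
  have hsq : Tendsto (fun a => exp (-a) ^ 2) atTop (𝓝 0) := by
    simpa using tendsto_exp_neg_atTop_nhds_zero.pow 2
  have hlim := ((tendsto_const_nhds (x := (1 : ℝ))).sub hsq).div
    ((tendsto_const_nhds (x := exp θ)).sub (hsq.mul_const (exp (-θ)))) (by simp [(exp_pos θ).ne'])
  simp only [sub_zero, zero_mul] at hlim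
  rw [exp_neg, ← one_div]
  exact hlim.congr fun a => (hform a).symm

namespace Polynomial.Chebyshev

theorem U_sq_sub_U_mul_U (R : Type*) [CommRing R] (n : ℤ) :
    U R (n + 1) ^ 2 - U R n * U R (n + 2) = 1 := by
  have hS := congr_arg (·.comp (2 * X)) (S_sq_add_S_sq R n)
  simp only [sub_comp, add_comp, mul_comp, pow_comp, X_comp, one_comp, S_comp_two_mul_X] at hS
  linear_combination hS - U R n * U_add_two R n

theorem one_div_eval_U_mul_eval_U {K : Type*} [Field K] {t : K} (n : ℤ)
    (h₁ : (U K (n + 1)).eval t ≠ 0) (h₂ : (U K (n + 2)).eval t ≠ 0) :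
    1 / ((U K (n + 1)).eval t * (U K (n + 2)).eval t) =
      (U K (n + 1)).eval t / (U K (n + 2)).eval t - (U K n).eval t / (U K (n + 1)).eval t := by
  have h := congr_arg (eval t) (U_sq_sub_U_mul_U K n)
  simp only [eval_sub, eval_pow, eval_mul, eval_one] at h
  field_simp
  linear_combination -h

theorem eval_U_real_cosh_pos {θ : ℝ} (hθ : 0 < θ) {n : ℤ} (hn : 0 ≤ n) :
    0 < (U ℝ n).eval (cosh θ) := by
  have hsinh : 0 < sinh ((n + 1) * θ) := sinh_pos_iff.mpr (by positivity)
  rw [← U_real_cosh] at hsinh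
  exact pos_of_mul_pos_left hsinh (sinh_pos_iff.mpr hθ).le

theorem tendsto_eval_U_div_eval_U_real_cosh {θ : ℝ} (hθ : 0 < θ) :
    Tendsto (fun n : ℕ => (U ℝ n).eval (cosh θ) / (U ℝ (n + 1)).eval (cosh θ)) atTop
      (𝓝 (exp (-θ))) := by
  have hsinh : sinh θ ≠ 0 := (sinh_pos_iff.mpr hθ).ne'
  have hratio : ∀ n : ℕ, (U ℝ n).eval (cosh θ) / (U ℝ (n + 1)).eval (cosh θ) =
      sinh ((n + 1) * θ) / sinh ((n + 1) * θ + θ) := by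
    intro n
    rw [← mul_div_mul_right _ _ hsinh, U_real_cosh, U_real_cosh]
    push_cast
    ring_nf
  have harg : Tendsto (fun n : ℕ => ((n : ℝ) + 1) * θ) atTop atTop :=
    (tendsto_atTop_add_const_right _ 1 tendsto_natCast_atTop_atTop).atTop_mul_const hθ
  exact ((tendsto_sinh_div_sinh_add_atTop θ).comp harg).congr fun n => (hratio n).symm

theorem hasSum_one_div_eval_U_mul_eval_U_real_cosh {θ : ℝ} (hθ : 0 < θ) :
    HasSum (fun j : ℕ => 1 / ((U ℝ ((j : ℤ) + 1)).eval (cosh θ) *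
      (U ℝ ((j : ℤ) + 2)).eval (cosh θ))) (exp (-θ) - 1 / (2 * cosh θ)) := by
  set ρ : ℕ → ℝ := fun n => (U ℝ n).eval (cosh θ) / (U ℝ (n + 1)).eval (cosh θ) with hρ
  have hpos (j : ℕ) (k : ℤ) (hk : 0 ≤ k) : 0 < (U ℝ (j + k)).eval (cosh θ) :=
    eval_U_real_cosh_pos hθ (by positivity)
  have hterm (j : ℕ) : 1 / ((U ℝ ((j : ℤ) + 1)).eval (cosh θ) *
      (U ℝ ((j : ℤ) + 2)).eval (cosh θ)) = ρ (j + 1) - ρ j := by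
    rw [one_div_eval_U_mul_eval_U _ (hpos j 1 zero_le_one).ne' (hpos j 2 zero_le_two).ne', hρ]
    push_cast
    ring_nf
  rw [hasSum_iff_tendsto_nat_of_nonneg fun j => by
    have := hpos j 1 zero_le_one; have := hpos j 2 zero_le_two; positivity]
  simp only [hterm, Finset.sum_range_sub]
  have hρ0 : ρ 0 = 1 / (2 * cosh θ) := by simp [hρ, U_one]
  rw [hρ0]
  exact (tendsto_eval_U_div_eval_U_real_cosh hθ).sub_const _

end Polynomial.Chebyshev

section Catalan

variable {x : ℝ}

theorem mul_Cfun_sq (hx0 : x ≠ 0) (hx : x ≤ 1 / 4) : x * Cfun x ^ 2 = Cfun x - 1 := by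
  have hs : √(1 - 4 * x) ^ 2 = 1 - 4 * x := sq_sqrt (by linarith)
  unfold Cfun
  set s := √(1 - 4 * x)
  field_simp
  linear_combination hs

theorem Cfun_pos (hx0 : 0 < x) : 0 < Cfun x := by
  have hs : √(1 - 4 * x) < 1 := (sqrt_lt' one_pos).mpr (by linarith)
  unfold Cfun
  exact div_pos (by linarith) (by linarith)

theorem Cfun_lt_two (hx0 : 0 < x) (hx : x < 1 / 4) : Cfun x < 2 := by
  have hs0 : 0 < √(1 - 4 * x) := sqrt_pos.mpr (by linarith)
  have hs1 : √(1 - 4 * x) < 1 := (sqrt_lt' one_pos).mpr (by linarith)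
  have hs : √(1 - 4 * x) ^ 2 = 1 - 4 * x := sq_sqrt (by linarith)
  unfold Cfun
  rw [div_lt_iff₀ (by linarith)]
  nlinarith

theorem sqrt_mul_Cfun_lt_one (hx0 : 0 < x) (hx : x < 1 / 4) : √x * Cfun x < 1 := by
  rw [← sq_lt_one_iff₀ (mul_pos (sqrt_pos.mpr hx0) (Cfun_pos hx0)).le, mul_pow,
    sq_sqrt hx0.le, mul_Cfun_sq hx0.ne' hx.le]
  linarith [Cfun_lt_two hx0 hx]

theorem sqrt_mul_Cfun_add_inv (hx0 : 0 < x) (hx : x ≤ 1 / 4) :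
    √x * Cfun x + (√x * Cfun x)⁻¹ = 1 / √x := by
  have hu : 0 < √x := sqrt_pos.mpr hx0
  have hC : Cfun x ≠ 0 := (Cfun_pos hx0).ne'
  field_simp
  linear_combination mul_Cfun_sq hx0.ne' hx + Cfun x ^ 2 * sq_sqrt hx0.le

end Catalan

open Polynomial.Chebyshev in
/-- `Σ_{j≥1} 1/(√x · U_j(t) · U_{j+1}(t)) = x·C(x)²` where `t = 1/(2√x)`.
The series over `j ≥ 1` is indexed by `j : ℕ` via `j ↦ j + 1`. -/
theorem chebyshev_sum_eq_xC_sq (x : ℝ) (hx0 : 0 < x) (hx : x < 1/4) :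
    Summable (fun j : ℕ => 1 / (Real.sqrt x * chebU ((j : ℤ) + 1) (1 / (2 * Real.sqrt x)) *
      chebU ((j : ℤ) + 2) (1 / (2 * Real.sqrt x)))) ∧
    ∑' j : ℕ, 1 / (Real.sqrt x * chebU ((j : ℤ) + 1) (1 / (2 * Real.sqrt x)) *
      chebU ((j : ℤ) + 2) (1 / (2 * Real.sqrt x))) = x * (Cfun x) ^ 2 := by
  have hr : 0 < √x * Cfun x := mul_pos (sqrt_pos.mpr hx0) (Cfun_pos hx0)
  have hθ : 0 < -log (√x * Cfun x) := neg_pos.mpr (log_neg hr (sqrt_mul_Cfun_lt_one hx0 hx))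
  have hcosh : cosh (-log (√x * Cfun x)) = 1 / (2 * √x) := by
    rw [cosh_neg, cosh_log hr, sqrt_mul_Cfun_add_inv hx0 hx.le]
    ring
  have hval : 1 / √x * (√x * Cfun x - 1 / (2 * (1 / (2 * √x)))) = x * Cfun x ^ 2 := by
    rw [mul_Cfun_sq hx0.ne' hx.le]
    field_simp
  have hsum := (hasSum_one_div_eval_U_mul_eval_U_real_cosh hθ).mul_left (1 / √x)
  rw [hcosh, neg_neg, exp_log hr, hval] at hsum
  have hsum' : HasSum (fun j : ℕ => 1 / (√x * chebU ((j : ℤ) + 1) (1 / (2 * √x)) *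
      chebU ((j : ℤ) + 2) (1 / (2 * √x)))) (x * Cfun x ^ 2) :=
    hsum.congr_fun fun j => by simp only [chebU]; ring
  exact ⟨hsum'.summable, hsum'.tsum_eq⟩
end

section
/- For integers i > 1, s ≥ 1 and t ≥ 2 with s + t < n − 2i + 3, a_i(n,s,t) = Σ_{ℓ=2}^{m} (binomial(ℓ+t−1, ℓ) − 1)·a_{i−1}(n−t, s, ℓ), where m = n − s − t − 2i + 4. -/
/-- `numLet i n s t` is the number of Catalan words of length `n` containing exactly `s`
letters equal to `i` and exactly `t` letters equal to `0`. -/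
noncomputable def numLet (i n s t : ℕ) : ℕ :=
  Set.ncard {a : Fin n → ℕ | IsCatalanWord a ∧ countEq a i = s ∧ countEq a 0 = t}

/-!
Deleting the zeros of a Catalan word `a` and lowering every other letter by one gives a Catalan
word `b = lower a`. Conversely, `a` is recovered from `b` by prefixing `c₀` zeros, raising every
letter of `b` by one and inserting `cⱼ` zeros right after the `j`-th new `1`; no other shape is
possible since a `0` can only follow a `0` or a `1`. The result is a Catalan word exactly when `b`
is one, `c₀ ≥ 1` and `c₁ + ⋯ + c_ℓ ≥ 1` (the first `1` needs a `0` on each side), where `ℓ` is the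
number of zeros of `b`, i.e. of ones of `a`. With `c₀ + ⋯ + c_ℓ = t` there are
`C(ℓ + t - 1, ℓ) - 1` such vectors by stars and bars, and `2 ≤ ℓ ≤ m` because each of
`1, …, i - 1` occurs at least twice in `a`.
-/

theorem List.mem_take_ofFn {α : Type*} {n p : ℕ} {a : Fin n → α} {x : α} :
    x ∈ (List.ofFn a).take p ↔ ∃ j : Fin n, (j : ℕ) < p ∧ a j = x := by
  simp only [List.mem_take_iff_getElem, List.getElem_ofFn, List.length_ofFn]
  constructor
  · rintro ⟨j, hj, rfl⟩
    exact ⟨⟨j, (lt_min_iff.mp hj).2⟩, (lt_min_iff.mp hj).1, rfl⟩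
  · rintro ⟨j, hj, rfl⟩
    exact ⟨j, lt_min hj j.isLt, rfl⟩

theorem List.mem_drop_ofFn {α : Type*} {n p : ℕ} {a : Fin n → α} {x : α} :
    x ∈ (List.ofFn a).drop p ↔ ∃ j : Fin n, p ≤ (j : ℕ) ∧ a j = x := by
  simp only [List.mem_drop_iff_getElem, List.getElem_ofFn, List.length_ofFn]
  constructor
  · rintro ⟨j, hj, rfl⟩
    exact ⟨⟨p + j, by omega⟩, by simp, rfl⟩
  · rintro ⟨j, hj, rfl⟩
    exact ⟨j - p, by omega, by congr 1; exact Fin.ext (by simp; omega)⟩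

theorem List.eq_of_append_cons_eq_of_notMem {α : Type*} {x : α} {u v u' v' : List α}
    (h : u ++ x :: v = u' ++ x :: v') (hu : x ∉ u) (hu' : x ∉ u') : u = u' ∧ v = v' := by
  induction u generalizing u' with
  | nil =>
    obtain _ | ⟨z, u'⟩ := u'
    · simpa using h
    · obtain ⟨rfl, -⟩ := List.cons_eq_cons.mp h
      simp at hu'
  | cons y u ih =>
    obtain _ | ⟨z, u'⟩ := u'
    · obtain ⟨rfl, -⟩ := List.cons_eq_cons.mp h
      simp at hu
    · obtain ⟨rfl, htail⟩ := List.cons_eq_cons.mp h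
      simp only [List.mem_cons, not_or] at hu hu'
      obtain ⟨rfl, rfl⟩ := ih htail hu.2 hu'.2
      exact ⟨rfl, rfl⟩

theorem List.eq_of_replicate_append_eq {α : Type*} {x : α} {c c' : ℕ} {e e' : List α}
    (he : e.head? ≠ some x) (he' : e'.head? ≠ some x)
    (h : List.replicate c x ++ e = List.replicate c' x ++ e') :
    c = c' ∧ e = e' := by
  induction c generalizing c' with
  | zero => cases c' <;> simp_all [List.replicate_succ]
  | succ c ih =>
    cases c' with
    | zero =>
      simp only [List.replicate_succ, List.replicate_zero, List.nil_append, List.cons_append] at h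
      simp [← h] at he'
    | succ c' => simp_all [List.replicate_succ]

theorem Set.ncard_eq_sum_ncard_fiberwise {α β : Type*} [DecidableEq β] {s : Set α}
    (hs : s.Finite) {f : α → β} {t : Finset β} (H : Set.MapsTo f s t) :
    s.ncard = ∑ b ∈ t, (s ∩ {a | f a = b}).ncard := by
  rw [Set.ncard_eq_toFinset_card s hs, Finset.card_eq_sum_card_fiberwise (by simpa using H)]
  refine Finset.sum_congr rfl fun b _ => ?_
  rw [Set.ncard_eq_toFinset_card _ (hs.inter_of_left _)]
  congr 1
  ext
  simp

theorem ncard_setOf_length_eq_and_sum_eq (k m : ℕ) :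
    {l : List ℕ | l.length = k ∧ l.sum = m}.ncard = (k + m - 1).choose m := by
  have himage : {l : List ℕ | l.length = k ∧ l.sum = m} =
      List.ofFn '' {f : Fin k → ℕ | ∑ i, f i = m} := by
    ext l
    constructor
    · rintro ⟨rfl, rfl⟩
      exact ⟨_, by simp [← List.sum_ofFn], List.ofFn_getElem⟩
    · rintro ⟨f, hf, rfl⟩
      exact ⟨List.length_ofFn, by rwa [List.sum_ofFn]⟩
  rw [himage, Set.ncard_image_of_injective _ List.ofFn_injective, ← Nat.card_coe_set_eq]
  refine (Nat.card_congr (Sym.equivNatSumOfFintype (Fin k) m).symm).trans ?_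
  rw [Nat.card_eq_fintype_card, Sym.card_sym_eq_choose, Fintype.card_fin]

def IsFlanked (l : List ℕ) : Prop :=
  ∀ u k v, l = u ++ (k + 1) :: v → k + 1 ∉ u → k ∈ u ∧ k ∈ v

def IsCatalanList (l : List ℕ) : Prop :=
  l.IsChain (fun x y => x ≤ y + 1) ∧ IsFlanked l

def catalanLists (i n s t : ℕ) : Set (List ℕ) :=
  {l | l.length = n ∧ IsCatalanList l ∧ l.count i = s ∧ l.count 0 = t}

theorem isFlanked_iff_getElem {l : List ℕ} :
    IsFlanked l ↔ ∀ (p : ℕ) (hp : p < l.length) (k : ℕ), l[p] = k + 1 →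
      k + 1 ∉ l.take p → k ∈ l.take p ∧ k ∈ l.drop (p + 1) := by
  constructor
  · intro h p hp k hk hnot
    refine h _ k _ ?_ hnot
    rw [← hk, ← List.drop_eq_getElem_cons, List.take_append_drop]
  · rintro h u k v rfl hnot
    have := h u.length (by simp) k (by simp) (by simpa [List.take_left])
    simpa [List.take_left, List.drop_left' (l₁ := u ++ [k + 1])] using this

theorem countEq_eq_count {n : ℕ} (a : Fin n → ℕ) (c : ℕ) :
    countEq a c = (List.ofFn a).count c := by
  rw [countEq, Set.ncard_eq_toFinset_card', ← Multiset.coe_count, ← Fin.univ_val_map,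
    Multiset.count_map]
  simp [Finset.card_def, Finset.filter_val, eq_comm]

theorem isCatalanWord_iff {n : ℕ} (a : Fin n → ℕ) :
    IsCatalanWord a ↔ IsCatalanList (List.ofFn a) := by
  simp only [IsCatalanWord, IsCatalanList, List.isChain_iff_getElem, isFlanked_iff_getElem,
    List.length_ofFn, List.getElem_ofFn, List.mem_take_ofFn, List.mem_drop_ofFn]
  refine and_congr Iff.rfl ⟨fun h p hp k hk hfirst => ?_, fun h p hpos hfirst => ?_⟩
  · obtain ⟨⟨i₁, h₁, e₁⟩, ⟨i₂, h₂, e₂⟩⟩ := h ⟨p, hp⟩ (by omega)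
      fun j hj => not_lt.mp fun hlt => hfirst ⟨j, hlt, hj.trans hk⟩
    exact ⟨⟨i₁, h₁, by omega⟩, ⟨i₂, h₂, by omega⟩⟩
  · obtain ⟨k, hk⟩ : ∃ k, a p = k + 1 := ⟨a p - 1, by omega⟩
    obtain ⟨⟨i₁, h₁, e₁⟩, ⟨i₂, h₂, e₂⟩⟩ := h p p.isLt k hk
      fun ⟨j, hj, e⟩ => (hfirst j (e.trans hk.symm)).not_gt hj
    exact ⟨⟨i₁, h₁, by omega⟩, ⟨i₂, h₂, by omega⟩⟩

theorem catalanLists_eq_image (i n s t : ℕ) : catalanLists i n s t =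
    List.ofFn '' {a : Fin n → ℕ | IsCatalanWord a ∧ countEq a i = s ∧ countEq a 0 = t} := by
  ext l
  simp only [catalanLists, Set.mem_ofPred_eq, Set.mem_image, isCatalanWord_iff, countEq_eq_count]
  constructor
  · rintro ⟨rfl, hl⟩
    exact ⟨_, List.ofFn_getElem ▸ hl, List.ofFn_getElem⟩
  · rintro ⟨a, ha, rfl⟩
    exact ⟨List.length_ofFn, ha⟩

theorem numLet_eq_ncard (i n s t : ℕ) : numLet i n s t = (catalanLists i n s t).ncard := by
  rw [numLet, catalanLists_eq_image, Set.ncard_image_of_injective _ List.ofFn_injective]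

namespace IsFlanked

variable {l : List ℕ}

theorem head?_eq (h : IsFlanked l) (hne : l ≠ []) : l.head? = some 0 := by
  obtain _ | ⟨_ | k, l⟩ := l
  · exact absurd rfl hne
  · rfl
  · exact absurd (h [] k l rfl List.not_mem_nil).1 List.not_mem_nil

theorem mem_of_succ_mem (h : IsFlanked l) {k : ℕ} (hk : k + 1 ∈ l) : k ∈ l := by
  obtain ⟨u, v, rfl, hu⟩ := List.eq_append_cons_of_mem hk
  exact List.mem_append_left _ (h u k v rfl hu).1

theorem mem_of_le (h : IsFlanked l) {x k : ℕ} (hx : x ∈ l) (hk : k ≤ x) : k ∈ l := by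
  induction x with
  | zero => rwa [Nat.le_zero.mp hk]
  | succ x ih =>
    rcases hk.eq_or_lt with rfl | hlt
    · exact hx
    · exact ih (h.mem_of_succ_mem hx) (by omega)

theorem two_le_count (h : IsFlanked l) {k : ℕ} (hk : k + 1 ∈ l) : 2 ≤ l.count k := by
  obtain ⟨u, v, rfl, hu⟩ := List.eq_append_cons_of_mem hk
  obtain ⟨hku, hkv⟩ := h u k v rfl hu
  have := List.count_pos_iff.mpr hku
  have := List.count_pos_iff.mpr hkv
  simp only [List.count_append, List.count_cons, beq_iff_eq, Nat.succ_ne_self, if_false]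
  omega

theorem range_subset_toFinset (h : IsFlanked l) {x : ℕ} (hx : x ∈ l) :
    Finset.range (x + 1) ⊆ l.toFinset :=
  fun _ hk => List.mem_toFinset.mpr (h.mem_of_le hx (Nat.lt_succ_iff.mp (Finset.mem_range.mp hk)))

theorem lt_length (h : IsFlanked l) {x : ℕ} (hx : x ∈ l) : x < l.length := by
  have := Finset.card_le_card (h.range_subset_toFinset hx)
  have := List.toFinset_card_le l
  simp only [Finset.card_range] at *
  omega

theorem count_zero_add_count_add_le (h : IsFlanked l) {j : ℕ} (hj : j + 1 ∈ l) :
    l.count 0 + l.count (j + 1) + 2 * j ≤ l.length := by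
  have hmid : 2 * j ≤ ∑ x ∈ Finset.range j, l.count (x + 1) := by
    simpa [mul_comm] using Finset.card_nsmul_le_sum (Finset.range j) _ 2
      fun x hx => h.two_le_count (h.mem_of_le hj (by simp at hx; omega))
  calc l.count 0 + l.count (j + 1) + 2 * j ≤ ∑ x ∈ Finset.range (j + 2), l.count x := by
        rw [Finset.sum_range_succ, Finset.sum_range_succ']
        omega
    _ ≤ ∑ x ∈ l.toFinset, l.count x :=
        Finset.sum_le_sum_of_subset (h.range_subset_toFinset hj)
    _ = l.length := List.sum_toFinset_count_eq_length l

end IsFlanked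

theorem catalanLists_finite (i n s t : ℕ) : (catalanLists i n s t).Finite := by
  rw [catalanLists_eq_image]
  refine ((Set.Finite.pi fun _ => Set.finite_Iio n).subset fun a ha j _ => ?_).image _
  simpa using ((isCatalanWord_iff a).mp ha.1).2.lt_length (List.mem_ofFn.mpr ⟨j, rfl⟩)

def lower (l : List ℕ) : List ℕ :=
  (l.filter (· ≠ 0)).map (· - 1)

def raise : List ℕ → List ℕ → List ℕ
  | [], _ => []
  | 0 :: b, cs => 1 :: (List.replicate (cs.headD 0) 0 ++ raise b cs.tail)
  | (k + 1) :: b, cs => (k + 2) :: raise b cs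

def glue (c : ℕ) (cs b : List ℕ) : List ℕ :=
  List.replicate c 0 ++ raise b cs

section LowerRaise

variable {b cs : List ℕ} {c : ℕ}

@[simp] theorem lower_nil : lower [] = [] := rfl

@[simp] theorem lower_cons_zero (l : List ℕ) : lower (0 :: l) = lower l := by simp [lower]

@[simp] theorem lower_cons_succ (k : ℕ) (l : List ℕ) : lower ((k + 1) :: l) = k :: lower l := by
  simp [lower]

@[simp] theorem lower_append (u v : List ℕ) : lower (u ++ v) = lower u ++ lower v := by
  simp [lower]

@[simp] theorem lower_replicate_zero (c : ℕ) : lower (List.replicate c 0) = [] := by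
  simp [lower]

theorem mem_lower {l : List ℕ} {k : ℕ} : k ∈ lower l ↔ k + 1 ∈ l := by
  induction l with
  | nil => simp
  | cons x l ih => cases x <;> simp [ih]

@[simp] theorem lower_raise : lower (raise b cs) = b := by
  induction b generalizing cs with
  | nil => rfl
  | cons x b ih => cases x <;> simp [raise, ih]

@[simp] theorem lower_glue : lower (glue c cs b) = b := by
  simp [glue]

theorem head?_raise : (raise b cs).head? = b.head?.map (· + 1) := by
  obtain _ | ⟨_ | k, b⟩ := b <;> rfl

theorem count_succ_raise (k : ℕ) : (raise b cs).count (k + 1) = b.count k := by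
  induction b generalizing cs with
  | nil => rfl
  | cons x b ih =>
    cases x with
    | zero => cases k <;> simp [raise, List.count_replicate, ih]
    | succ x => simp [raise, List.count_cons, ih]

theorem count_zero_raise (h : cs.length = b.count 0) : (raise b cs).count 0 = cs.sum := by
  induction b generalizing cs with
  | nil => simp_all [raise]
  | cons x b ih =>
    cases x with
    | zero =>
      obtain _ | ⟨c, cs⟩ := cs
      · simp at h
      · simp [raise, ih (by simpa using h)]
    | succ k => simp_all [raise]

theorem length_raise (h : cs.length = b.count 0) : (raise b cs).length = b.length + cs.sum := by
  induction b generalizing cs with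
  | nil => simp_all [raise]
  | cons x b ih =>
    cases x with
    | zero =>
      obtain _ | ⟨c, cs⟩ := cs
      · simp at h
      · simp [raise, ih (by simpa using h)]
        omega
    | succ k =>
      simp_all [raise]
      omega

theorem count_succ_glue (k : ℕ) : (glue c cs b).count (k + 1) = b.count k := by
  simp [glue, List.count_replicate, count_succ_raise]

theorem count_zero_glue (h : cs.length = b.count 0) :
    (glue c cs b).count 0 = c + cs.sum := by
  simp [glue, count_zero_raise h]

theorem length_glue (h : cs.length = b.count 0) :
    (glue c cs b).length = c + b.length + cs.sum := by
  simp [glue, length_raise h]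
  omega

theorem head?_raise_ne_zero : (raise b cs).head? ≠ some 0 := by
  rw [head?_raise]
  cases b.head? <;> simp

theorem isChain_replicate_zero_append_iff {c : ℕ} {w : List ℕ} :
    (List.replicate c 0 ++ w).IsChain (fun x y => x ≤ y + 1) ↔
      w.IsChain (fun x y => x ≤ y + 1) := by
  induction c with
  | zero => rfl
  | succ c ih => simp [List.replicate_succ, List.isChain_cons, ih]

theorem isChain_raise_iff :
    (raise b cs).IsChain (fun x y => x ≤ y + 1) ↔ b.IsChain (fun x y => x ≤ y + 1) := by
  induction b generalizing cs with
  | nil => simp [raise]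
  | cons x b ih =>
    cases x with
    | zero => simp [raise, List.isChain_cons, isChain_replicate_zero_append_iff, ih]
    | succ k => simp [raise, List.isChain_cons, head?_raise, ih]

theorem isChain_glue_iff :
    (glue c cs b).IsChain (fun x y => x ≤ y + 1) ↔ b.IsChain (fun x y => x ≤ y + 1) := by
  rw [glue, isChain_replicate_zero_append_iff, isChain_raise_iff]

theorem exists_eq_glue {a : List ℕ} (ha : a.IsChain (fun x y => x ≤ y + 1)) :
    ∃ c cs b, cs.length = b.count 0 ∧ a = glue c cs b := by
  induction a with
  | nil => exact ⟨0, [], [], rfl, rfl⟩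
  | cons x a ih =>
    obtain ⟨hx, ha⟩ := List.isChain_cons.mp ha
    obtain ⟨c, cs, b, hcs, rfl⟩ := ih ha
    match x, c with
    | 0, c => exact ⟨c + 1, cs, b, hcs, rfl⟩
    | 1, c => exact ⟨0, c :: cs, 0 :: b, by simp [hcs], rfl⟩
    | k + 2, 0 => exact ⟨0, cs, (k + 1) :: b, by simpa using hcs, rfl⟩
    | k + 2, c + 1 => exact absurd (hx 0 rfl) (by omega)

theorem raise_inj_right {cs' : List ℕ} (h : raise b cs = raise b cs')
    (hcs : cs.length = b.count 0) (hcs' : cs'.length = b.count 0) : cs = cs' := by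
  induction b generalizing cs cs' with
  | nil => simp_all [List.length_eq_zero_iff]
  | cons x b ih =>
    cases x with
    | zero =>
      obtain _ | ⟨c, cs⟩ := cs
      · simp at hcs
      obtain _ | ⟨c', cs'⟩ := cs'
      · simp at hcs'
      simp only [raise, List.headD_cons, List.tail_cons, List.cons.injEq, true_and] at h
      obtain ⟨rfl, he⟩ := List.eq_of_replicate_append_eq head?_raise_ne_zero head?_raise_ne_zero h
      rw [ih he (by simpa using hcs) (by simpa using hcs')]
    | succ k =>
      simp only [raise, List.cons.injEq, true_and] at h
      exact ih h (by simpa using hcs) (by simpa using hcs')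

theorem glue_injOn :
    Set.InjOn (fun p : (ℕ × List ℕ) × List ℕ => glue p.1.1 p.1.2 p.2)
      {p | p.1.2.length = p.2.count 0} := by
  rintro ⟨⟨c, cs⟩, b⟩ hcs ⟨⟨c', cs'⟩, b'⟩ hcs' h
  simp only [Set.mem_ofPred_eq] at hcs hcs'
  dsimp only at h
  obtain ⟨rfl, he⟩ := List.eq_of_replicate_append_eq head?_raise_ne_zero head?_raise_ne_zero h
  obtain rfl : b = b' := by simpa using congrArg lower he
  rw [raise_inj_right he hcs hcs']

end LowerRaise

theorem exists_eq_append_cons_of_lower_eq {a u' v' : List ℕ} {k : ℕ}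
    (h : lower a = u' ++ k :: v') :
    ∃ u v, a = u ++ (k + 1) :: v ∧ lower u = u' ∧ lower v = v' := by
  induction a generalizing u' with
  | nil => simp at h
  | cons x a ih =>
    cases x with
    | zero =>
      obtain ⟨u, v, rfl, rfl, rfl⟩ := ih (by simpa using h)
      exact ⟨0 :: u, v, rfl, by simp, rfl⟩
    | succ m =>
      obtain _ | ⟨y, u'⟩ := u'
      · obtain ⟨rfl, rfl⟩ : m = k ∧ lower a = v' := by simpa using h
        exact ⟨[], a, rfl, rfl, rfl⟩
      · obtain ⟨rfl, ht⟩ : m = y ∧ lower a = u' ++ k :: v' := by simpa using h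
        obtain ⟨u, v, rfl, rfl, rfl⟩ := ih ht
        exact ⟨(m + 1) :: u, v, rfl, by simp, rfl⟩

theorem isFlanked_iff_lower {a : List ℕ} :
    IsFlanked a ↔ IsFlanked (lower a) ∧ ∀ u v, a = u ++ 1 :: v → 1 ∉ u → 0 ∈ u ∧ 0 ∈ v := by
  constructor
  · refine fun h => ⟨fun u' k v' hsplit hnot => ?_, fun u v => h u 0 v⟩
    obtain ⟨u, v, rfl, rfl, rfl⟩ := exists_eq_append_cons_of_lower_eq hsplit
    obtain ⟨hu, hv⟩ := h u (k + 1) v rfl (mt mem_lower.mpr hnot)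
    exact ⟨mem_lower.mpr hu, mem_lower.mpr hv⟩
  · rintro ⟨hlower, hone⟩ u (_ | k) v rfl hnot
    · exact hone u v rfl hnot
    · obtain ⟨hu, hv⟩ := hlower (lower u) k (lower v) (by simp) (mt mem_lower.mp hnot)
      exact ⟨mem_lower.mp hu, mem_lower.mp hv⟩

theorem isFlanked_glue_iff {c : ℕ} {cs b : List ℕ} (hb : b.head? = some 0)
    (hcs : cs.length = b.count 0) :
    IsFlanked (glue c cs b) ↔ IsFlanked b ∧ c ≠ 0 ∧ cs.sum ≠ 0 := by
  obtain ⟨b, rfl⟩ := List.head?_eq_some_iff.mp hb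
  obtain _ | ⟨c₁, cs⟩ := cs
  · simp at hcs
  have hsplit : glue c (c₁ :: cs) (0 :: b) =
      List.replicate c 0 ++ 1 :: (List.replicate c₁ 0 ++ raise b cs) := rfl
  have hzero : 0 ∈ List.replicate c₁ 0 ++ raise b cs ↔ (c₁ :: cs).sum ≠ 0 := by
    rw [← List.count_pos_iff, List.count_append, List.count_replicate_self,
      count_zero_raise (by simpa using hcs), List.sum_cons]
    omega
  have hone : (1 : ℕ) ∉ List.replicate c 0 := by simp [List.mem_replicate]
  rw [isFlanked_iff_lower, lower_glue, hsplit, ← hzero]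
  refine and_congr Iff.rfl ⟨fun h => ?_, fun ⟨hc, h0⟩ u v huv hu => ?_⟩
  · simpa [List.mem_replicate] using h _ _ rfl hone
  · obtain ⟨rfl, rfl⟩ := List.eq_of_append_cons_eq_of_notMem huv hone hu
    exact ⟨by simp [List.mem_replicate, hc], h0⟩

def zeroRuns (t L : ℕ) : Set (ℕ × List ℕ) :=
  {p | p.1 ≠ 0 ∧ p.2.length = L ∧ p.1 + p.2.sum = t ∧ p.2.sum ≠ 0}

theorem ncard_zeroRuns (t L : ℕ) : (zeroRuns (t + 1) L).ncard = (L + t).choose L - 1 := by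
  set S : Set (ℕ × List ℕ) := {p | p.1 ≠ 0 ∧ p.2.length = L ∧ p.1 + p.2.sum = t + 1}
  have hdiff : zeroRuns (t + 1) L = S \ {(t + 1, List.replicate L 0)} := by
    ext ⟨c, cs⟩
    simp only [zeroRuns, S, Set.mem_sdiff, Set.mem_ofPred_eq, Set.mem_singleton_iff,
      Prod.mk.injEq, List.eq_replicate_iff, ← List.sum_eq_zero_iff]
    omega
  have hinj : S.InjOn fun p => (p.1 - 1) :: p.2 := by
    rintro ⟨c, cs⟩ ⟨hc, -⟩ ⟨c', cs'⟩ ⟨hc', -⟩ h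
    obtain ⟨hcc, rfl⟩ := List.cons_eq_cons.mp h
    simp only [Prod.mk.injEq, and_true] at hc hc' hcc ⊢
    omega
  have himage : (fun p => (p.1 - 1) :: p.2) '' S = {l | l.length = L + 1 ∧ l.sum = t} := by
    ext l
    constructor
    · rintro ⟨⟨c, cs⟩, ⟨hc, hlen, hsum⟩, rfl⟩
      dsimp only at hc hlen hsum
      exact ⟨by simpa using hlen, by simp; omega⟩
    · rintro ⟨hlen, hsum⟩
      obtain _ | ⟨c, cs⟩ := l
      · simp at hlen
      · simp only [List.length_cons, add_left_inj, List.sum_cons] at hlen hsum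
        exact ⟨⟨c + 1, cs⟩, ⟨by omega, hlen, by dsimp only; omega⟩, rfl⟩
  have hmem : (t + 1, List.replicate L 0) ∈ S := ⟨by omega, by simp, by simp⟩
  rw [hdiff, Set.ncard_sdiff_singleton_of_mem hmem, ← hinj.ncard_image, himage,
    ncard_setOf_length_eq_and_sum_eq, show L + 1 + t - 1 = L + t by omega,
    Nat.choose_symm_add]

theorem image_glue_eq {i n s t L : ℕ} (hs : s ≠ 0) :
    (fun p : (ℕ × List ℕ) × List ℕ => glue p.1.1 p.1.2 p.2) ''
        (zeroRuns t L ×ˢ catalanLists i (n - t) s L) =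
      catalanLists (i + 1) n s t ∩ {a | a.count 1 = L} := by
  ext a
  constructor
  · rintro ⟨⟨⟨c, cs⟩, b⟩, ⟨⟨hc, hlen, hsum, hsum₀⟩, hblen, ⟨hbchain, hbfl⟩, hbi, hb₀⟩, rfl⟩
    dsimp only at hc hlen hsum hsum₀ hblen hbi hb₀ ⊢
    have hcs : cs.length = b.count 0 := hlen.trans hb₀.symm
    have hbne : b ≠ [] := by rintro rfl; simp at hbi; omega
    have : b.length ≠ 0 := by simpa using hbne
    refine ⟨⟨?_, ⟨isChain_glue_iff.mpr hbchain, ?_⟩, ?_, ?_⟩, ?_⟩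
    · rw [length_glue hcs]; omega
    · exact (isFlanked_glue_iff (hbfl.head?_eq hbne) hcs).mpr ⟨hbfl, hc, hsum₀⟩
    · rw [count_succ_glue, hbi]
    · rw [count_zero_glue hcs, hsum]
    · rw [Set.mem_ofPred_eq, count_succ_glue, hb₀]
  · rintro ⟨⟨hlen, ⟨hchain, hfl⟩, hci, hc₀⟩, hc₁⟩
    obtain ⟨c, cs, b, hcs, rfl⟩ := exists_eq_glue hchain
    have hbfl : IsFlanked b := by simpa using (isFlanked_iff_lower.mp hfl).1
    rw [Set.mem_ofPred_eq, count_succ_glue] at hc₁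
    rw [count_succ_glue] at hci
    have hbne : b ≠ [] := by rintro rfl; simp at hci; omega
    obtain ⟨-, hc, hsum⟩ := (isFlanked_glue_iff (hbfl.head?_eq hbne) hcs).mp hfl
    rw [count_zero_glue hcs] at hc₀
    rw [length_glue hcs] at hlen
    exact ⟨⟨⟨c, cs⟩, b⟩, ⟨⟨hc, hcs.trans hc₁, hc₀, hsum⟩, by dsimp only; omega,
      ⟨isChain_glue_iff.mp hchain, hbfl⟩, hci, hc₁⟩, rfl⟩

theorem two_le_and_add_le_of_mem_catalanLists {j N s L : ℕ} {b : List ℕ}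
    (hb : b ∈ catalanLists (j + 1) N s L) (hs : s ≠ 0) : 2 ≤ L ∧ L + s + 2 * j ≤ N := by
  obtain ⟨rfl, ⟨-, hfl⟩, rfl, rfl⟩ := hb
  have hj : j + 1 ∈ b := List.count_pos_iff.mp (Nat.pos_of_ne_zero hs)
  exact ⟨hfl.two_le_count (hfl.mem_of_le hj (by omega)), hfl.count_zero_add_count_add_le hj⟩

theorem numLet_recurrence_general (i s t n : ℕ) (hi : 1 < i) (hs : 1 ≤ s) (ht : 2 ≤ t) :
    numLet i n s t = ∑ l ∈ Finset.Icc 2 (n + 4 - (s + t + 2 * i)),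
      (Nat.choose (l + t - 1) l - 1) * numLet (i - 1) (n - t) s l := by
  obtain ⟨j, rfl⟩ : ∃ j, i = j + 2 := ⟨i - 2, by omega⟩
  obtain ⟨t, rfl⟩ : ∃ t', t = t' + 1 := ⟨t - 1, by omega⟩
  have hmaps : Set.MapsTo (List.count 1) (catalanLists (j + 2) n s (t + 1))
      (Finset.Icc 2 (n + 4 - (s + (t + 1) + 2 * (j + 2)))) := by
    intro a ha
    obtain ⟨_, ⟨-, hb⟩, -⟩ := (image_glue_eq (by omega)).superset ⟨ha, rfl⟩
    have := two_le_and_add_le_of_mem_catalanLists hb (by omega)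
    simp only [Finset.coe_Icc, Set.mem_Icc]
    omega
  rw [numLet_eq_ncard, Set.ncard_eq_sum_ncard_fiberwise (catalanLists_finite ..) hmaps]
  refine Finset.sum_congr rfl fun L _ => ?_
  have hsub : zeroRuns (t + 1) L ×ˢ catalanLists (j + 1) (n - (t + 1)) s L ⊆
      {p | p.1.2.length = p.2.count 0} := fun p ⟨hp, hb⟩ => hp.2.1.trans hb.2.2.2.symm
  rw [← image_glue_eq (by omega), (glue_injOn.mono hsub).ncard_image, Set.ncard_prod,
    ncard_zeroRuns, numLet_eq_ncard, show L + (t + 1) - 1 = L + t by omega]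
  rfl

/-- Recurrence for `aᵢ(n,s,t)` when `s > 0` and `i > 1`:
if `s + t < n - 2i + 3` then `aᵢ(n,s,t) = Σ_{ℓ=2}^{m} (C(ℓ+t-1,ℓ) - 1)·a_{i-1}(n-t,s,ℓ)`
with `m = n - s - t - 2i + 4`. -/
theorem numLet_recurrence (i s t n : ℕ) (hi : 1 < i) (hs : 1 ≤ s) (ht : 2 ≤ t)
    (h : s + t + 2 * i < n + 3) :
    numLet i n s t = ∑ l ∈ Finset.Icc 2 (n + 4 - (s + t + 2 * i)),
      (Nat.choose (l + t - 1) l - 1) * numLet (i - 1) (n - t) s l :=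
  numLet_recurrence_general i s t n hi hs ht
end
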